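/- arXiv:1210.5305 — 5 statements merged into one kernel-verified Lean document; each statement's English description precedes it below -/
import Mathlib

section
/- Let n be a positive integer, 1 ≤ j ≤ n, and let a, b, c, q be complex numbers and x_1, ..., x_n distinct nonzero complex numbers with a x_ν ≠ 1 for all ν. Then -\sum_{ν=1}^n \frac{(q^{-1} x_ν - c q^{j-1}) (a x_ν; q)_{j-1} (a b q^j x_ν; q)_{n-j}}{x_ν (1 - a x_ν) \prod_{l ≠ ν} (x_l - x_ν)} = \frac{c q^{j-1}}{\prod_{l=1}^n x_l} + χ(j=1) · \frac{(-1)^n a^{n-1} q^{-1} (1 - a c q)(b q; q)_{n-1}}{\prod_{l=1}^n (1 - a x_l)}, where χ(P) is 1 if P holds and 0 otherwise. -/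
open Finset

/-- q-Pochhammer symbol `(x;q)_m = ∏_{i=0}^{m-1} (1 - x q^i)`. -/
noncomputable def qPoch (x q : ℂ) (m : ℕ) : ℂ := ∏ i ∈ Finset.range m, (1 - x * q ^ i)

open Polynomial in
lemma coeff_lagrange_basis (s : Finset ℂ) {i : ℂ} (hi : i ∈ s) :
    (Lagrange.basis s id i).coeff (#s - 1) = (∏ j ∈ s.erase i, (i - j))⁻¹ := by
  have hb : Lagrange.basis s id i
      = C (∏ j ∈ s.erase i, (i - j)⁻¹) * Lagrange.nodal (s.erase i) id := by
    rw [Lagrange.basis, Lagrange.nodal_eq, map_prod, ← prod_mul_distrib]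
    exact prod_congr rfl fun j _ => rfl
  rw [hb, coeff_C_mul]
  have hcard : #s - 1 = #(s.erase i) := (card_erase_of_mem hi).symm
  have h1 : (Lagrange.nodal (s.erase i) id).coeff (#s - 1) = 1 := by
    rw [hcard]
    have hm := Lagrange.nodal_monic (s := s.erase i) (v := (id : ℂ → ℂ))
    have hd := Lagrange.natDegree_nodal (s := s.erase i) (v := (id : ℂ → ℂ))
    rw [← hd]
    exact hm.coeff_natDegree
  rw [h1, mul_one, ← prod_inv_distrib]

open Polynomial in
lemma sum_eval_div_prod (s : Finset ℂ) (f : ℂ[X]) (hf : f.degree < #s) :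
    ∑ i ∈ s, f.eval i / ∏ j ∈ s.erase i, (i - j) = f.coeff (#s - 1) := by
  have hinj : Set.InjOn (id : ℂ → ℂ) s := fun _ _ _ _ h => h
  have h := Lagrange.eq_interpolate hinj hf
  conv_rhs => rw [h]
  rw [Lagrange.interpolate_apply, finset_sum_coeff]
  refine Finset.sum_congr rfl fun i hi => ?_
  rw [coeff_C_mul, coeff_lagrange_basis s hi, div_eq_mul_inv]
  rfl

theorem partial_fraction_identity_a
    (n : ℕ) (hn : 1 ≤ n) (j : ℕ) (hj1 : 1 ≤ j) (hj2 : j ≤ n)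
    (a b c q : ℂ) (hq : q ≠ 0)
    (x : Fin n → ℂ) (hx0 : ∀ ν, x ν ≠ 0) (hxd : Function.Injective x)
    (hax : ∀ ν, a * x ν ≠ 1) :
    -(∑ ν : Fin n,
        ((q⁻¹ * x ν - c * q ^ (j-1)) * qPoch (a * x ν) q (j-1)
            * qPoch (a * b * q ^ j * x ν) q (n-j))
          / (x ν * (1 - a * x ν) * ∏ l ∈ Finset.univ.erase ν, (x l - x ν)))
      = c * q ^ (j-1) / (∏ l, x l)
        + (if j = 1 then 1 else 0)
          * ((-1 : ℂ) ^ n * a ^ (n-1) * q⁻¹ * (1 - a * c * q) * qPoch (b*q) q (n-1))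
          / (∏ l, (1 - a * x l)) := by
  classical
  obtain ⟨m, rfl⟩ : ∃ m, n = m + 1 := ⟨n - 1, by omega⟩
  obtain ⟨k, rfl⟩ : ∃ k, j = k + 1 := ⟨j - 1, by omega⟩
  have hkm : k ≤ m := by omega
  simp only [Nat.add_sub_cancel, Nat.add_sub_add_right] at *
  -- the polynomial N
  set N : Polynomial ℂ :=
    ((Polynomial.C q⁻¹ * Polynomial.X - Polynomial.C (c * q ^ k))
      * (∏ i ∈ range k, (1 - Polynomial.C (a * q ^ i) * Polynomial.X)))
      * (∏ i ∈ range (m - k), (1 - Polynomial.C (a * b * q ^ (k+1) * q ^ i) * Polynomial.X))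
    with hN
  have heval : ∀ z : ℂ, N.eval z
      = (q⁻¹ * z - c * q ^ k) * qPoch (a * z) q k * qPoch (a*b*q^(k+1)*z) q (m - k) := by
    intro z
    have h1 : ∀ (w : ℂ) (r : ℕ), Polynomial.eval z (∏ i ∈ range r,
        (1 - Polynomial.C (w * q ^ i) * Polynomial.X)) = qPoch (w * z) q r := by
      intro w r
      rw [Polynomial.eval_prod, qPoch]
      exact prod_congr rfl fun i _ => by simp; ring
    simp only [hN, Polynomial.eval_mul, Polynomial.eval_sub, Polynomial.eval_C,
      Polynomial.eval_X, h1]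
  have hNdeg : N.natDegree ≤ m + 1 := by
    have hb : ∀ (w : ℂ) (r : ℕ), (∏ i ∈ range r,
        (1 - Polynomial.C (w * q ^ i) * Polynomial.X)).natDegree ≤ r := by
      intro w r
      refine le_trans (Polynomial.natDegree_prod_le _ _) ?_
      calc ∑ i ∈ range r, (1 - Polynomial.C (w * q ^ i) * Polynomial.X).natDegree
          ≤ ∑ _i ∈ range r, 1 := by
            refine sum_le_sum fun i _ => ?_
            refine le_trans (Polynomial.natDegree_sub_le _ _) ?_
            simp only [Polynomial.natDegree_one, max_le_iff]
            exact ⟨Nat.zero_le _, le_trans (Polynomial.natDegree_C_mul_le _ _)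
              Polynomial.natDegree_X_le⟩
        _ = r := by simp
    have h1 : (Polynomial.C q⁻¹ * Polynomial.X - Polynomial.C (c * q ^ k)).natDegree ≤ 1 := by
      refine le_trans (Polynomial.natDegree_sub_le _ _) ?_
      simp only [Polynomial.natDegree_C, max_le_iff]
      exact ⟨le_trans (Polynomial.natDegree_C_mul_le _ _) Polynomial.natDegree_X_le,
        Nat.zero_le _⟩
    calc N.natDegree ≤ _ + _ := Polynomial.natDegree_mul_le
      _ ≤ (1 + k) + (m - k) := by
          have := Polynomial.natDegree_mul_le (p := Polynomial.C q⁻¹ * Polynomial.X - Polynomial.C (c * q ^ k)) (q := ∏ i ∈ range k, (1 - Polynomial.C (a * q ^ i) * Polynomial.X))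
          have h2 := hb a k
          have h3 := hb (a * b * q ^ (k+1)) (m - k)
          omega
      _ ≤ m + 1 := by omega
  -- basic data
  set T : Finset ℂ := univ.image x with hT
  have hxinj : ∀ u ∈ (univ : Finset (Fin (m+1))), ∀ v ∈ univ, x u = x v → u = v :=
    fun u _ v _ h => hxd h
  have hTcard : #T = m + 1 := by
    rw [hT, card_image_of_injective _ hxd, card_univ, Fintype.card_fin]
  have h0T : (0:ℂ) ∉ T := by
    simp only [hT, mem_image, mem_univ, true_and, not_exists]
    exact fun ν h => hx0 ν h
  set prx : ℂ := ∏ l, x l with hprx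
  have hprx0 : prx ≠ 0 := prod_ne_zero_iff.mpr fun l _ => hx0 l
  obtain ⟨d, hd⟩ : ∃ d : ℂ, d = (-1 : ℂ) ^ m := ⟨_, rfl⟩
  have hd2 : d * d = 1 := by
    rw [hd, ← pow_add]
    exact Even.neg_one_pow ⟨m, rfl⟩
  have hd0 : d ≠ 0 := by
    intro h; rw [h, mul_zero] at hd2; exact one_ne_zero hd2.symm
  set P : Fin (m+1) → ℂ := fun ν => ∏ l ∈ univ.erase ν, (x ν - x l) with hP
  set Q : Fin (m+1) → ℂ := fun ν => ∏ l ∈ univ.erase ν, (x l - x ν) with hQ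
  have hQP : ∀ ν, Q ν = d * P ν := by
    intro ν
    show (∏ l ∈ univ.erase ν, (x l - x ν)) = d * ∏ l ∈ univ.erase ν, (x ν - x l)
    rw [hd]
    have : ∀ l ∈ univ.erase ν, x l - x ν = (-1) * (x ν - x l) := fun l _ => by ring
    rw [prod_congr rfl this, prod_mul_distrib, prod_const, card_erase_of_mem (mem_univ ν),
      card_univ, Fintype.card_fin, Nat.add_sub_cancel]
  have hP0 : ∀ ν, P ν ≠ 0 := by
    intro ν
    refine prod_ne_zero_iff.mpr fun l hl => sub_ne_zero.mpr ?_
    exact fun h => (mem_erase.mp hl).1 (hxd h.symm)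
  have hQ0 : ∀ ν, Q ν ≠ 0 := by
    intro ν; rw [hQP]; exact mul_ne_zero hd0 (hP0 ν)
  have hax0 : ∀ ν, 1 - a * x ν ≠ 0 := fun ν h => hax ν (by linear_combination -h)
  have hone : (-1 : ℂ) ^ (m + 1) = -d := by rw [pow_succ, ← hd]; ring
  -- rewrite the goal sum
  have hgoal : (∑ ν : Fin (m+1),
        ((q⁻¹ * x ν - c * q ^ k) * qPoch (a * x ν) q k
            * qPoch (a * b * q ^ (k+1) * x ν) q (m-k))
          / (x ν * (1 - a * x ν) * ∏ l ∈ Finset.univ.erase ν, (x l - x ν)))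
      = ∑ ν : Fin (m+1), N.eval (x ν) / (x ν * (1 - a * x ν) * Q ν) :=
    sum_congr rfl fun ν _ => by rw [heval]
  rw [hgoal]
  set S : ℂ := ∑ ν : Fin (m+1), N.eval (x ν) / (x ν * (1 - a * x ν) * Q ν) with hS
  have hNdegW : N.degree ≤ (m + 1 : ℕ) :=
    le_trans Polynomial.degree_le_natDegree (by exact_mod_cast Nat.cast_le.mpr hNdeg)
  have hN0 : N.eval 0 = -(c * q ^ k) := by
    rw [heval]; simp [qPoch]
  have hprod0 : ∏ z ∈ T, ((0:ℂ) - z) = -d * prx := by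
    rw [hT, prod_image hxinj]
    have h1 : ∀ ν ∈ (univ : Finset (Fin (m+1))), (0:ℂ) - x ν = (-1) * x ν :=
      fun ν _ => by ring
    rw [prod_congr rfl h1, prod_mul_distrib, prod_const, card_univ, Fintype.card_fin,
      hone, hprx]
  rcases eq_or_ne a 0 with rfl | ha
  · -- case a = 0
    have hNsimp : N = Polynomial.C q⁻¹ * Polynomial.X - Polynomial.C (c * q ^ k) := by
      rw [hN]; simp
    set s0 : Finset ℂ := insert 0 T with hs0
    have hcard : #s0 = m + 2 := by rw [hs0, card_insert_of_notMem h0T, hTcard]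
    have hdeg : N.degree < (#s0 : ℕ) := by
      rw [hcard]
      exact lt_of_le_of_lt hNdegW (by exact_mod_cast Nat.lt_succ_self (m+1))
    have key := sum_eval_div_prod s0 N hdeg
    rw [sum_insert h0T, hcard] at key
    have e0 : s0.erase 0 = T := by rw [hs0, erase_insert h0T]
    rw [e0, hprod0] at key
    have hsum : ∑ y ∈ T, N.eval y / ∏ z ∈ s0.erase y, (y - z) = d * S := by
      rw [hT, sum_image hxinj, hS, mul_sum]
      refine sum_congr rfl fun ν _ => ?_
      have ev : s0.erase (x ν) = insert 0 (T.erase (x ν)) := by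
        rw [hs0, erase_insert_of_ne (hx0 ν).symm]
      have hb1 : (0:ℂ) ∉ T.erase (x ν) := fun h => h0T (mem_of_mem_erase h)
      have hprodv : ∏ z ∈ T.erase (x ν), (x ν - z) = P ν := by
        rw [hT, ← Finset.image_erase hxd, prod_image (fun u _ v _ h => hxd h)]
      rw [ev, prod_insert hb1, hprodv, hQP ν, sub_zero]
      rw [mul_div_assoc', div_eq_div_iff (mul_ne_zero (hx0 ν) (hP0 ν))
        (by exact mul_ne_zero (mul_ne_zero (hx0 ν) (hax0 ν)) (mul_ne_zero hd0 (hP0 ν)))]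
      ring
    rw [hsum, hN0] at key
    have hco : N.coeff (m + 2 - 1) = if m = 0 then q⁻¹ else 0 := by
      rw [show m + 2 - 1 = m + 1 from rfl, hNsimp, Polynomial.coeff_sub,
        Polynomial.coeff_C_mul, Polynomial.coeff_X, Polynomial.coeff_C]
      rcases Nat.eq_zero_or_pos m with hm | hm
      · subst hm; norm_num
      · rw [if_neg (by omega : ¬ (1 = m + 1)), if_neg (by omega : ¬ (m + 1 = 0)),
          if_neg (by omega : ¬ (m = 0))]
        ring
    rw [hco] at key
    have hprax1 : (∏ l, (1 - (0:ℂ) * x l)) = 1 := by simp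
    rw [hprax1]
    have hR : (if k + 1 = 1 then (1:ℂ) else 0)
        * ((-1)^(m+1) * (0:ℂ)^m * q⁻¹ * (1 - 0*c*q) * qPoch (b*q) q m) / 1
        = -d * (if m = 0 then q⁻¹ else 0) := by
      rcases Nat.eq_zero_or_pos m with hm | hm
      · have hk : k = 0 := by omega
        subst hm; subst hk
        simp [qPoch, hd]
      · rw [zero_pow (by omega : m ≠ 0), if_neg (show ¬ (m = 0) by omega)]
        ring
    rw [hR]
    have hA : -(c * q ^ k) / (-d * prx) = d * (c * q ^ k) / prx := by
      rw [div_eq_div_iff (mul_ne_zero (neg_ne_zero.mpr hd0) hprx0) hprx0]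
      linear_combination (c * q ^ k * prx) * hd2
    rw [hA] at key
    linear_combination (-d) * key + (S + c * q ^ k / prx) * hd2
  · -- case a ≠ 0
    have hainv : a * a⁻¹ = 1 := mul_inv_cancel₀ ha
    have hia : a⁻¹ ≠ 0 := inv_ne_zero ha
    have hiaT : a⁻¹ ∉ T := by
      simp only [hT, mem_image, mem_univ, true_and, not_exists]
      exact fun ν h => hax ν (by rw [h, hainv])
    have h0a : (0:ℂ) ≠ a⁻¹ := fun h => hia h.symm
    have h0ins : (0:ℂ) ∉ insert a⁻¹ T := by
      simp only [mem_insert, not_or]; exact ⟨h0a, h0T⟩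
    set prax : ℂ := ∏ l, (1 - a * x l) with hprax
    have hprax0 : prax ≠ 0 := prod_ne_zero_iff.mpr fun l _ => hax0 l
    set s1 : Finset ℂ := insert 0 (insert a⁻¹ T) with hs1
    have hcard : #s1 = m + 3 := by
      rw [hs1, card_insert_of_notMem h0ins, card_insert_of_notMem hiaT, hTcard]
    have hdeg : N.degree < (#s1 : ℕ) := by
      rw [hcard]
      exact lt_of_le_of_lt hNdegW
        (by exact_mod_cast Nat.lt_succ_of_lt (Nat.lt_succ_self (m+1)))
    have key := sum_eval_div_prod s1 N hdeg
    rw [sum_insert h0ins, sum_insert hiaT, hcard,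
      show m + 3 - 1 = m + 2 from rfl,
      Polynomial.coeff_eq_zero_of_natDegree_lt (by omega : N.natDegree < m + 2)] at key
    have e0 : s1.erase 0 = insert a⁻¹ T := by rw [hs1, erase_insert h0ins]
    have ea : s1.erase a⁻¹ = insert 0 T := by
      rw [hs1, erase_insert_of_ne h0a, erase_insert hiaT]
    -- term at 0
    have htm0 : N.eval 0 / ∏ z ∈ s1.erase 0, ((0:ℂ) - z) = -d * a * (c * q ^ k) / prx := by
      rw [e0, prod_insert hiaT, hprod0, hN0]
      rw [div_eq_div_iff (mul_ne_zero (by simpa using hia) (mul_ne_zero (neg_ne_zero.mpr hd0) hprx0)) hprx0]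
      linear_combination (c * q ^ k * prx * d * d) * hainv + (c * q ^ k * prx) * hd2
    -- term at a⁻¹
    have hprodinv : ∏ z ∈ T, (a⁻¹ - z) = (a⁻¹)^(m+1) * prax := by
      rw [hT, prod_image hxinj]
      have h1 : ∀ ν ∈ (univ : Finset (Fin (m+1))), a⁻¹ - x ν = a⁻¹ * (1 - a * x ν) :=
        fun ν _ => by field_simp
      rw [prod_congr rfl h1, prod_mul_distrib, prod_const, card_univ, Fintype.card_fin, hprax]
    have hpow : a ^ (m+2) * (a⁻¹) ^ (m+2) = 1 := by
      rw [← mul_pow, hainv, one_pow]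
    have htma : N.eval a⁻¹ / ∏ z ∈ s1.erase a⁻¹, (a⁻¹ - z)
        = a ^ (m+2) * N.eval a⁻¹ / prax := by
      rw [ea, prod_insert h0T, hprodinv, sub_zero]
      rw [div_eq_div_iff (mul_ne_zero hia (mul_ne_zero (pow_ne_zero _ hia) hprax0)) hprax0]
      linear_combination (-(N.eval a⁻¹ * prax)) * hpow
    -- terms at x ν
    have hsum : ∑ y ∈ T, N.eval y / ∏ z ∈ s1.erase y, (y - z) = -d * a * S := by
      rw [hT, sum_image hxinj, hS, mul_sum]
      refine sum_congr rfl fun ν _ => ?_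
      have hxa : a⁻¹ ≠ x ν := fun h => hax ν (by rw [← h, hainv])
      have ev : s1.erase (x ν) = insert 0 (insert a⁻¹ (T.erase (x ν))) := by
        rw [hs1, erase_insert_of_ne (hx0 ν).symm, erase_insert_of_ne hxa]
      have hb1 : (0:ℂ) ∉ insert a⁻¹ (T.erase (x ν)) := by
        simp only [mem_insert, not_or]
        exact ⟨h0a, fun h => h0T (mem_of_mem_erase h)⟩
      have hb2 : a⁻¹ ∉ T.erase (x ν) := fun h => hiaT (mem_of_mem_erase h)
      have hprodv : ∏ z ∈ T.erase (x ν), (x ν - z) = P ν := by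
        rw [hT, ← Finset.image_erase hxd, prod_image (fun u _ v _ h => hxd h)]
      rw [ev, prod_insert hb1, prod_insert hb2, hprodv, hQP ν, sub_zero]
      have hden1 : x ν * ((x ν - a⁻¹) * P ν) ≠ 0 :=
        mul_ne_zero (hx0 ν) (mul_ne_zero (sub_ne_zero.mpr fun h => hxa h.symm) (hP0 ν))
      rw [show (-d) * a * (N.eval (x ν) / (x ν * (1 - a * x ν) * (d * P ν)))
          = (-d * a * N.eval (x ν)) / (x ν * (1 - a * x ν) * (d * P ν)) by ring,
        div_eq_div_iff hden1
        (mul_ne_zero (mul_ne_zero (hx0 ν) (hax0 ν)) (mul_ne_zero hd0 (hP0 ν)))]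
      linear_combination (-(d * Polynomial.eval (x ν) N * x ν * P ν)) * hainv
    rw [htm0, htma, hsum] at key
    -- identify the boundary term
    have hR : (if k + 1 = 1 then (1:ℂ) else 0)
        * ((-1)^(m+1) * a^m * q⁻¹ * (1 - a*c*q) * qPoch (b*q) q m)
        = -d * a^(m+1) * N.eval a⁻¹ := by
      rcases Nat.eq_zero_or_pos k with hk | hk
      · subst hk
        rw [if_pos rfl, one_mul, heval]
        have h1 : qPoch (a * a⁻¹) q 0 = 1 := by simp [qPoch]
        have h2 : a * b * q ^ (0+1) * a⁻¹ = b * q := by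
          field_simp; ring
        rw [h1, h2, hone, Nat.sub_zero]
        have h3 : a^m * q⁻¹ * (1 - a*c*q) = a^(m+1) * ((q⁻¹ * a⁻¹ - c * q ^ 0) * 1) := by
          field_simp
          ring
        linear_combination (-d * qPoch (b*q) q m) * h3
      · rw [if_neg (by omega), zero_mul, heval]
        have h1 : qPoch (a * a⁻¹) q k = 0 := by
          rw [qPoch]
          apply prod_eq_zero (mem_range.mpr hk)
          rw [hainv]; simp
        rw [h1]; ring
    rw [show (if k + 1 = 1 then (1:ℂ) else 0)
        * ((-1)^(m+1) * a^m * q⁻¹ * (1 - a*c*q) * qPoch (b*q) q m) / prax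
        = (-d * a^(m+1) * N.eval a⁻¹) / prax by rw [← hR]]
    linear_combination (d * a⁻¹) * key
      + (d * d * (c * q ^ k / prx) + d * d * S
          - d * a ^ (m+1) * (Polynomial.eval a⁻¹ N / prax)) * hainv
      + (c * q ^ k / prx + S) * hd2
end

section
/- Let n be a positive integer, 1 ≤ j ≤ n, and let a, b, c, q be complex numbers and x_1, ..., x_n distinct nonzero complex numbers with a b q^{n-1} x_ν ≠ 1 for all ν. Then -\sum_{ν=1}^n \frac{(q^{-1} x_ν - c q^{j-1}) (a x_ν; q)_{j-1} (a b q^j x_ν; q)_{n-j}}{x_ν (1 - a b q^{n-1} x_ν) \prod_{l ≠ ν} (x_l - x_ν)} = \frac{c q^{j-1}}{\prod_{l=1}^n x_l} - χ(j=n) · \frac{a^{n-1} q^{n(n-3)/2} (1 - a b c q^{2n-1})(b q; q)_{n-1}}{\prod_{l=1}^n (1 - a b q^{n-1} x_l)}. -/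
open Finset Polynomial

private lemma qPoch_zero (x q : ℂ) : qPoch x q 0 = 1 := by simp [qPoch]

private lemma natDegree_one_sub_le (d : ℂ) : (1 - C d * X).natDegree ≤ 1 := by
  refine le_trans (natDegree_sub_le _ _) ?_
  simp only [natDegree_one, max_le_iff]
  exact ⟨Nat.zero_le _, le_trans (natDegree_C_mul_le _ _) (by simp)⟩

private lemma natDegree_prod_one_sub_le (m : ℕ) (d : ℕ → ℂ) :
    (∏ i ∈ range m, (1 - C (d i) * X)).natDegree ≤ m := by
  refine le_trans (natDegree_prod_le _ _) ?_
  have h := Finset.sum_le_sum (s := range m) fun i _ => natDegree_one_sub_le (d i)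
  simpa using h

private lemma coeff_prod_one_sub (m : ℕ) (d : ℕ → ℂ) :
    (∏ i ∈ range m, (1 - C (d i) * X)).coeff m = ∏ i ∈ range m, (-(d i)) := by
  induction m with
  | zero => simp
  | succ m ih =>
    rw [Finset.prod_range_succ, Finset.prod_range_succ, ← ih]
    have h1 : (∏ i ∈ range m, (1 - C (d i) * X)) * (1 - C (d m) * X)
        = (∏ i ∈ range m, (1 - C (d i) * X))
          - C (d m) * ((∏ i ∈ range m, (1 - C (d i) * X)) * X) := by ring
    rw [h1, coeff_sub, coeff_C_mul, coeff_mul_X,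
      coeff_eq_zero_of_natDegree_lt
        (lt_of_le_of_lt (natDegree_prod_one_sub_le m d) (Nat.lt_succ_self m))]
    ring

private lemma basis_coeff (s : Finset ℂ) (i : ℂ) (hi : i ∈ s) :
    (Lagrange.basis s id i).coeff (s.card - 1) = (∏ z ∈ s.erase i, (i - z))⁻¹ := by
  have hd := Lagrange.degree_basis (Set.injOn_id _) hi
  have hnd : (Lagrange.basis s id i).natDegree = s.card - 1 := natDegree_eq_of_degree_eq_some hd
  rw [← hnd, coeff_natDegree, Lagrange.basis, leadingCoeff_prod, ← Finset.prod_inv_distrib]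
  refine Finset.prod_congr rfl fun z hz => ?_
  rw [Lagrange.basisDivisor, leadingCoeff_mul, leadingCoeff_C, leadingCoeff_X_sub_C, mul_one, id_eq, id_eq]

private lemma sum_eval_div_prod_s2 (s : Finset ℂ) (P : ℂ[X]) (hP : P.degree < s.card) :
    ∑ y ∈ s, P.eval y / ∏ z ∈ s.erase y, (y - z) = P.coeff (s.card - 1) := by
  have h := Lagrange.eq_interpolate (f := P) (Set.injOn_id (s : Set ℂ)) hP
  conv_rhs => rw [h]
  rw [Lagrange.interpolate_apply, finset_sum_coeff]
  refine Finset.sum_congr rfl fun i hi => ?_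
  rw [coeff_C_mul, basis_coeff s i hi, id_eq, div_eq_mul_inv]

private lemma sum_range_id_rel (m : ℕ) :
    m * m = (∑ i ∈ range m, i) + (∑ i ∈ range m, i) + m := by
  induction m with
  | zero => simp
  | succ m ih =>
    rw [Finset.sum_range_succ]
    have hexp : (m+1)*(m+1) = m*m + 2*m + 1 := by ring
    rw [hexp, ih]
    omega

private lemma zpow_helper (m : ℕ) {q : ℂ} (hq : q ≠ 0) :
    q ^ ((((m+1 : ℕ) : ℤ) * (((m+1 : ℕ) : ℤ) - 3)) / 2) = q ^ (∑ i ∈ range m, i) * q⁻¹ := by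
  have h2 : (∑ i ∈ range m, i) * 2 = m * (m - 1) := Finset.sum_range_id_mul_two m
  have h4 : ((m : ℤ)) * ((m : ℤ) - 1) = 2 * ((∑ i ∈ range m, i : ℕ) : ℤ) := by
    cases m with
    | zero => simp
    | succ m' =>
      have h2' : ((∑ i ∈ range (m'+1), i : ℕ) : ℤ) * 2 = ((m'+1 : ℕ) : ℤ) * (m' : ℕ) := by
        exact_mod_cast congrArg (Nat.cast : ℕ → ℤ) (by simpa using h2)
      push_cast at h2' ⊢
      linarith
  have hc : (((m+1:ℕ)) : ℤ) = (m : ℤ) + 1 := by push_cast; ring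
  have h6 : ((((m+1:ℕ)) : ℤ) * ((((m+1:ℕ)) : ℤ) - 3)) = 2 * ((∑ i ∈ range m, i : ℕ) : ℤ) - 2 := by
    rw [hc]
    linear_combination h4
  have h5 : ((((m+1:ℕ)) : ℤ) * ((((m+1:ℕ)) : ℤ) - 3)) / 2 = ((∑ i ∈ range m, i : ℕ) : ℤ) - 1 := by
    rw [h6]; omega
  rw [h5, zpow_sub₀ hq, zpow_natCast, zpow_one, div_eq_mul_inv]
set_option maxHeartbeats 1600000 in
theorem partial_fraction_identity_b
    (n : ℕ) (hn : 1 ≤ n) (j : ℕ) (hj1 : 1 ≤ j) (hj2 : j ≤ n)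
    (a b c q : ℂ) (hq : q ≠ 0)
    (x : Fin n → ℂ) (hx0 : ∀ ν, x ν ≠ 0) (hxd : Function.Injective x)
    (habx : ∀ ν, a * b * q ^ (n-1) * x ν ≠ 1) :
    -(∑ ν : Fin n,
        ((q⁻¹ * x ν - c * q ^ (j-1)) * qPoch (a * x ν) q (j-1)
            * qPoch (a * b * q ^ j * x ν) q (n-j))
          / (x ν * (1 - a * b * q ^ (n-1) * x ν) * ∏ l ∈ Finset.univ.erase ν, (x l - x ν)))
      = c * q ^ (j-1) / (∏ l, x l)
        - (if j = n then 1 else 0)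
          * (a ^ (n-1) * q ^ (((n : ℤ) * ((n : ℤ) - 3)) / 2) * (1 - a * b * c * q ^ (2*n-1))
              * qPoch (b*q) q (n-1))
          / (∏ l, (1 - a * b * q ^ (n-1) * x l)) := by
  obtain ⟨m, rfl⟩ : ∃ m, n = m + 1 := ⟨n - 1, by omega⟩
  clear hn
  simp only [Nat.add_sub_cancel] at habx ⊢
  -- basic nonvanishing facts
  have hΔ : ∀ ν : Fin (m+1), (∏ l ∈ univ.erase ν, (x l - x ν)) ≠ 0 := fun ν =>
    Finset.prod_ne_zero_iff.mpr fun l hl =>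
      sub_ne_zero_of_ne fun h => (Finset.mem_erase.mp hl).1 (hxd h)
  have h1α : ∀ ν, 1 - a * b * q ^ m * x ν ≠ 0 := fun ν =>
    sub_ne_zero_of_ne (Ne.symm (habx ν))
  have hprodx : (∏ l, x l) ≠ 0 := Finset.prod_ne_zero_iff.mpr fun l _ => hx0 l
  have hprodα : (∏ l, (1 - a * b * q ^ m * x l)) ≠ 0 :=
    Finset.prod_ne_zero_iff.mpr fun l _ => h1α l
  -- negated points
  have hneginj : Function.Injective (fun ν : Fin (m+1) => -(x ν)) := fun ν μ h =>
    hxd (neg_inj.mp h)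
  have h0img : (0:ℂ) ∉ Finset.univ.image (fun ν : Fin (m+1) => -(x ν)) := by
    simp only [mem_image, mem_univ, true_and, neg_eq_zero, not_exists]
    exact fun ν => hx0 ν
  have hcard : (univ.image (fun ν : Fin (m+1) => -(x ν))).card = m + 1 := by
    rw [Finset.card_image_of_injective _ hneginj, card_univ, Fintype.card_fin]
  -- the polynomial
  set QN : Polynomial ℂ := (C (-q⁻¹) * X - C (c * q ^ (j-1))) *
      ((∏ i ∈ range (j-1), (1 - C (-(a * q ^ i)) * X)) *
       (∏ i ∈ range (m+1-j), (1 - C (-(a * b * q ^ (j+i))) * X))) with hQN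
  have hL : (C (-q⁻¹) * X - C (c * q ^ (j-1))).natDegree ≤ 1 := by
    refine le_trans (natDegree_sub_le _ _) ?_
    simp only [max_le_iff]
    exact ⟨le_trans (natDegree_C_mul_le _ _) (by simp), le_trans (natDegree_C _).le (by omega)⟩
  have hQNdeg : QN.natDegree ≤ m + 1 := by
    rw [hQN]
    refine le_trans natDegree_mul_le ?_
    refine le_trans (add_le_add hL (le_trans natDegree_mul_le
      (add_le_add (natDegree_prod_one_sub_le _ _) (natDegree_prod_one_sub_le _ _)))) ?_
    omega
  have hQNeval : ∀ t : ℂ, QN.eval (-t) =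
      (q⁻¹ * t - c * q ^ (j-1)) * qPoch (a * t) q (j-1)
        * qPoch (a * b * q ^ j * t) q (m+1-j) := by
    intro t
    rw [hQN]
    simp only [eval_mul, eval_sub, eval_prod, eval_one, eval_C, eval_X]
    rw [qPoch, qPoch, ← mul_assoc]
    congr 1
    congr 1
    · ring
    · exact Finset.prod_congr rfl fun i _ => by ring
    · exact Finset.prod_congr rfl fun i _ => by rw [pow_add]; ring
  have hQN0 : QN.eval 0 = -(c * q ^ (j-1)) := by
    rw [hQN]; simp [eval_prod]
  by_cases hab : a * b = 0
  · -- degenerate case : only n+1 nodes needed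
    simp only [hab, zero_mul, sub_zero, mul_one, Finset.prod_const_one, div_one] at h1α hprodα ⊢
    have hscard : (insert (0:ℂ) (univ.image (fun ν : Fin (m+1) => -(x ν)))).card = m + 2 := by
      rw [Finset.card_insert_of_notMem h0img, hcard]
    have hsum := sum_eval_div_prod_s2 (insert (0:ℂ) (univ.image (fun ν : Fin (m+1) => -(x ν)))) QN
      (by rw [hscard]
          exact lt_of_le_of_lt degree_le_natDegree (by exact_mod_cast Nat.lt_succ_of_le hQNdeg))
    rw [hscard, Finset.sum_insert h0img,
      Finset.sum_image (fun ν _ μ _ h => hneginj h)] at hsum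
    -- the 0-term
    rw [Finset.erase_insert h0img, Finset.prod_image (fun ν _ μ _ h => hneginj h)] at hsum
    rw [show (∏ ν : Fin (m+1), ((0:ℂ) - -(x ν))) = ∏ ν, x ν from
      Finset.prod_congr rfl fun ν _ => by ring] at hsum
    -- the x-terms
    have hterm : ∀ ν : Fin (m+1),
        QN.eval (-(x ν)) / ∏ z ∈ (insert (0:ℂ)
            (univ.image (fun ν : Fin (m+1) => -(x ν)))).erase (-(x ν)), (-(x ν) - z)
        = -(((q⁻¹ * x ν - c * q ^ (j-1)) * qPoch (a * x ν) q (j-1)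
              * qPoch (a * b * q ^ j * x ν) q (m+1-j))
            / (x ν * ∏ l ∈ univ.erase ν, (x l - x ν))) := by
      intro ν
      have h02 : (0:ℂ) ≠ -(x ν) := fun h => hx0 ν (neg_eq_zero.mp h.symm)
      rw [Finset.erase_insert_of_ne h02]
      have he2 : (univ.image (fun ν : Fin (m+1) => -(x ν))).erase (-(x ν))
          = (univ.erase ν).image (fun ν : Fin (m+1) => -(x ν)) := by
        rw [Finset.image_erase hneginj]
      rw [he2, Finset.prod_insert (fun h =>
          h0img (Finset.image_subset_image (Finset.erase_subset _ _) h)),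
        Finset.prod_image (fun μ _ l _ h => hneginj h)]
      rw [show (∏ l ∈ univ.erase ν, (-(x ν) - -(x l))) = ∏ l ∈ univ.erase ν, (x l - x ν) from
        Finset.prod_congr rfl fun l _ => by ring]
      rw [hQNeval (x ν), sub_zero, neg_mul, div_neg]
    rw [Finset.sum_congr rfl (fun ν _ => hterm ν), Finset.sum_neg_distrib, hQN0,
      show m + 2 - 1 = m + 1 from rfl] at hsum
    -- the coefficient
    have hcoeff : QN.coeff (m+1) = - ((if j = m+1 then 1 else 0)
        * (a ^ m * q ^ ((((m+1:ℕ)) : ℤ) * ((((m+1:ℕ)) : ℤ) - 3) / 2) * qPoch (b*q) q m)) := by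
      have h31 : (∏ i ∈ range (m+1-j), (1 - C (-(a * b * q ^ (j+i))) * X)) = 1 := by
        simp [hab]
      by_cases hj : j = m+1
      · subst hj
        rw [if_pos rfl, one_mul]
        have hQN' : QN = C (-q⁻¹) * ((∏ i ∈ range m, (1 - C (-(a * q ^ i)) * X)) * X)
            - C (c * q ^ m) * (∏ i ∈ range m, (1 - C (-(a * q ^ i)) * X)) := by
          rw [hQN]
          simp only [Nat.add_sub_cancel, Nat.sub_self, range_zero, prod_empty, mul_one]
          ring
        rw [hQN', coeff_sub, coeff_C_mul, coeff_mul_X, coeff_C_mul,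
          coeff_eq_zero_of_natDegree_lt
            (lt_of_le_of_lt (natDegree_prod_one_sub_le m _) (Nat.lt_succ_self m)),
          coeff_prod_one_sub]
        rw [show (∏ i ∈ range m, -(-(a * q ^ i))) = ∏ i ∈ range m, a * q ^ i from
          Finset.prod_congr rfl fun _ _ => neg_neg _]
        rw [Finset.prod_mul_distrib, Finset.prod_const, card_range,
          Finset.prod_pow_eq_pow_sum, zpow_helper m hq]
        rcases mul_eq_zero.mp hab with ha | hb
        · rcases Nat.eq_zero_or_pos m with hm | hm
          · subst hm; simp [qPoch]
          · rw [ha, zero_pow (by omega)]; ring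
        · rw [hb, show (0:ℂ) * q = 0 from zero_mul q, show qPoch 0 q m = 1 from by simp [qPoch]]
          ring
      · have hdeg : QN.natDegree ≤ j := by
          rw [hQN, h31, mul_one]
          refine le_trans natDegree_mul_le
            (le_trans (add_le_add hL (natDegree_prod_one_sub_le _ _)) (by omega))
        rw [coeff_eq_zero_of_natDegree_lt (lt_of_le_of_lt hdeg (by omega))]
        simp [hj]
    rw [hcoeff] at hsum
    simp only [hab, zero_mul] at hsum
    linear_combination hsum
  · -- main case : a*b ≠ 0
    have hb : b ≠ 0 := fun h => hab (by rw [h, mul_zero])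
    have hαne : a * b * q ^ m ≠ 0 := mul_ne_zero hab (pow_ne_zero _ hq)
    set t0 : ℂ := (a * b * q ^ m)⁻¹ with ht0
    have ht00 : t0 ≠ 0 := inv_ne_zero hαne
    have ht0x : ∀ ν, t0 ≠ x ν := fun ν h => habx ν (by rw [← h, ht0, mul_inv_cancel₀ hαne])
    have hnt0 : (-t0) ∉ insert (0:ℂ) (univ.image (fun ν : Fin (m+1) => -(x ν))) := by
      simp only [mem_insert, mem_image, mem_univ, true_and, not_or, not_exists]
      exact ⟨fun h => ht00 (neg_eq_zero.mp h), fun ν h => ht0x ν (neg_inj.mp h).symm⟩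
    have hscard : (insert (-t0) (insert (0:ℂ)
        (univ.image (fun ν : Fin (m+1) => -(x ν))))).card = m + 3 := by
      rw [Finset.card_insert_of_notMem hnt0, Finset.card_insert_of_notMem h0img, hcard]
    have hsum := sum_eval_div_prod_s2 (insert (-t0) (insert (0:ℂ)
        (univ.image (fun ν : Fin (m+1) => -(x ν))))) QN
      (by rw [hscard]
          refine lt_of_le_of_lt degree_le_natDegree ?_
          exact_mod_cast (lt_of_le_of_lt hQNdeg (by omega) : QN.natDegree < m + 3))
    rw [hscard, Finset.sum_insert hnt0, Finset.sum_insert h0img,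
      Finset.sum_image (fun ν _ μ _ h => hneginj h)] at hsum
    rw [show m + 3 - 1 = m + 2 from rfl,
      coeff_eq_zero_of_natDegree_lt (lt_of_le_of_lt hQNdeg (by omega))] at hsum
    -- the (-t0) term
    rw [Finset.erase_insert hnt0, Finset.prod_insert h0img,
      Finset.prod_image (fun ν _ μ _ h => hneginj h)] at hsum
    rw [show (∏ ν : Fin (m+1), (-t0 - -(x ν)))
        = (-t0)^(m+1) * ∏ ν, (1 - a*b*q^m * x ν) from by
      rw [Finset.prod_congr rfl (fun (ν : Fin (m+1)) _ =>
        show -t0 - -(x ν) = (-t0) * (1 - a*b*q^m * x ν) from by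
          rw [ht0]; field_simp [left_ne_zero_of_mul hab]; ring), Finset.prod_mul_distrib, Finset.prod_const,
        card_univ, Fintype.card_fin]] at hsum
    -- the 0 term
    rw [Finset.erase_insert_of_ne (fun h => ht00 (neg_eq_zero.mp h)), Finset.erase_insert h0img,
      Finset.prod_insert (fun h => hnt0 (Finset.mem_insert_of_mem h)),
      Finset.prod_image (fun ν _ μ _ h => hneginj h), hQN0] at hsum
    rw [show (∏ ν : Fin (m+1), ((0:ℂ) - -(x ν))) = ∏ ν, x ν from
      Finset.prod_congr rfl fun ν _ => by ring,
      show ((0:ℂ) - -t0) = t0 from by ring] at hsum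
    -- the x terms
    have hterm : ∀ ν : Fin (m+1),
        QN.eval (-(x ν)) / ∏ z ∈ (insert (-t0) (insert (0:ℂ)
            (univ.image (fun ν : Fin (m+1) => -(x ν))))).erase (-(x ν)), (-(x ν) - z)
        = -((a*b*q^m) * (((q⁻¹ * x ν - c * q ^ (j-1)) * qPoch (a * x ν) q (j-1)
              * qPoch (a * b * q ^ j * x ν) q (m+1-j))
            / (x ν * (1 - a*b*q^m * x ν) * ∏ l ∈ univ.erase ν, (x l - x ν)))) := by
      intro ν
      have hne1 : (-t0) ≠ -(x ν) := fun h => ht0x ν (neg_inj.mp h)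
      have h02 : (0:ℂ) ≠ -(x ν) := fun h => hx0 ν (neg_eq_zero.mp h.symm)
      rw [Finset.erase_insert_of_ne hne1, Finset.erase_insert_of_ne h02]
      have he2 : (univ.image (fun ν : Fin (m+1) => -(x ν))).erase (-(x ν))
          = (univ.erase ν).image (fun ν : Fin (m+1) => -(x ν)) := by
        rw [Finset.image_erase hneginj]
      rw [he2]
      rw [Finset.prod_insert (fun h => hnt0 (by
        rcases Finset.mem_insert.mp h with h | h
        · exact Finset.mem_insert.mpr (Or.inl h)
        · exact Finset.mem_insert.mpr
            (Or.inr (Finset.image_subset_image (Finset.erase_subset _ _) h))))]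
      rw [Finset.prod_insert (fun h =>
          h0img (Finset.image_subset_image (Finset.erase_subset _ _) h)),
        Finset.prod_image (fun μ _ l _ h => hneginj h)]
      rw [show (∏ l ∈ univ.erase ν, (-(x ν) - -(x l))) = ∏ l ∈ univ.erase ν, (x l - x ν) from
        Finset.prod_congr rfl fun l _ => by ring]
      rw [hQNeval (x ν), sub_zero]
      have hA : -(x ν) - -t0 = (a*b*q^m)⁻¹ * (1 - a*b*q^m * x ν) := by
        rw [ht0]; field_simp [left_ne_zero_of_mul hab]; ring
      rw [hA]
      obtain ⟨PP, hPP⟩ : ∃ PP, (∏ l ∈ univ.erase ν, (x l - x ν)) = PP := ⟨_, rfl⟩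
      have hPPne : PP ≠ 0 := hPP ▸ hΔ ν
      obtain ⟨NN, hNN⟩ : ∃ NN, (q⁻¹ * x ν - c * q ^ (j-1)) * qPoch (a * x ν) q (j-1)
          * qPoch (a * b * q ^ j * x ν) q (m+1-j) = NN := ⟨_, rfl⟩
      rw [hPP, hNN]
      field_simp [hPPne, hx0 ν, h1α ν, hαne]
    rw [Finset.sum_congr rfl (fun ν _ => hterm ν), Finset.sum_neg_distrib,
      ← Finset.mul_sum] at hsum
    -- split on j
    by_cases hj : j = m + 1
    · subst hj
      rw [hQNeval t0] at hsum
      simp only [Nat.add_sub_cancel, Nat.sub_self, qPoch_zero, mul_one] at hsum ⊢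
      simp only [eq_self_iff_true, if_true, one_mul]
      rw [zpow_helper m hq, show 2*(m+1)-1 = 2*m+1 from by omega]
      -- Pochhammer transformation at t0
      have hpoch : qPoch (a * t0) q m
          = (-1)^m * (b^m * (q^m * q^(∑ i ∈ range m, i)))⁻¹ * qPoch (b*q) q m := by
        rw [qPoch, qPoch, ← Finset.prod_range_reflect (fun i => 1 - a * t0 * q ^ i) m]
        have hfac : ∀ i ∈ range m, 1 - a * t0 * q ^ (m - 1 - i)
            = (-(b⁻¹ * (q * q ^ i)⁻¹)) * (1 - b * q * q ^ i) := by
          intro i hi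
          have him : i < m := Finset.mem_range.mp hi
          have h2 : (q:ℂ) ^ (m-1-i) = q ^ m / (q * q ^ i) := by
            rw [eq_div_iff (mul_ne_zero hq (pow_ne_zero _ hq)), ← pow_succ', ← pow_add]
            congr 1
            omega
          have hQi : (q:ℂ) * q ^ i ≠ 0 := mul_ne_zero hq (pow_ne_zero _ hq)
          rw [ht0, h2]
          field_simp [hb, hQi, hαne, left_ne_zero_of_mul hab]
          ring
        rw [Finset.prod_congr rfl hfac, Finset.prod_mul_distrib]
        congr 1
        calc ∏ i ∈ range m, -(b⁻¹ * (q * q ^ i)⁻¹)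
            = ∏ i ∈ range m, (-1) * (b * (q * q ^ i))⁻¹ :=
              Finset.prod_congr rfl fun i _ => by rw [mul_inv]; ring
          _ = (-1)^m * (∏ i ∈ range m, (b * (q * q ^ i)))⁻¹ := by
              rw [Finset.prod_mul_distrib, Finset.prod_const, card_range,
                Finset.prod_inv_distrib]
          _ = (-1)^m * (b^m * (q^m * q^(∑ i ∈ range m, i)))⁻¹ := by
              rw [Finset.prod_mul_distrib, Finset.prod_const, card_range,
                Finset.prod_mul_distrib, Finset.prod_const, card_range,
                Finset.prod_pow_eq_pow_sum]
      have hqmm : ((q:ℂ)^m)^m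
          = q^(∑ i ∈ range m, i) * q^(∑ i ∈ range m, i) * q^m := by
        rw [← pow_mul, ← pow_add, ← pow_add]
        congr 1
        exact sum_range_id_rel m
      have ht0pow : (-t0)^(m+1) = (-1)^m *
          (-(a^(m+1) * (b^(m+1) * (q^(∑ i ∈ range m, i) * q^(∑ i ∈ range m, i)
            * (q^m * q^m))))⁻¹) := by
        rw [ht0, show (-(a*b*q^m)⁻¹ : ℂ) = (-1) * (a*b*q^m)⁻¹ from by ring, mul_pow,
          inv_pow, pow_succ]
        rw [show ((a*b*q^m : ℂ))^(m+1) = a^(m+1) * (b^(m+1) * (q^(∑ i ∈ range m, i)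
            * q^(∑ i ∈ range m, i) * (q^m * q^m))) from by
          rw [mul_pow, mul_pow, pow_succ ((q:ℂ)^m) m, hqmm]; ring]
        ring
      have ha : a ≠ 0 := fun h => hab (by rw [h, zero_mul])
      have hTt : (q⁻¹ * t0 - c * q ^ m) * qPoch (a * t0) q m
            / ((-t0 - 0) * ((-t0) ^ (m + 1) * ∏ ν : Fin (m+1), (1 - a * b * q ^ m * x ν)))
          = (a*b*q^m) * (a ^ m * (q ^ (∑ i ∈ range m, i) * q⁻¹) * (1 - a * b * c * q ^ (2*m+1))
              * qPoch (b*q) q m / ∏ ν : Fin (m+1), (1 - a*b*q^m * x ν)) := by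
        rw [hpoch, ht0pow, ht0, sub_zero,
          show (q:ℂ)^(2*m+1) = q * (q^m * q^m) from by
            rw [show 2*m+1 = m+m+1 from by omega, pow_succ, pow_add]; ring,
          pow_succ a m, pow_succ b m]
        obtain ⟨AM, hAM⟩ : ∃ v, (a:ℂ)^m = v := ⟨_, rfl⟩
        obtain ⟨BM, hBM⟩ : ∃ v, (b:ℂ)^m = v := ⟨_, rfl⟩
        obtain ⟨QM, hQM⟩ : ∃ v, (q:ℂ)^m = v := ⟨_, rfl⟩
        obtain ⟨QK, hQK⟩ : ∃ v, (q:ℂ)^(∑ i ∈ range m, i) = v := ⟨_, rfl⟩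
        have hAMne : AM ≠ 0 := hAM ▸ pow_ne_zero _ ha
        have hBMne : BM ≠ 0 := hBM ▸ pow_ne_zero _ hb
        have hQMne : QM ≠ 0 := hQM ▸ pow_ne_zero _ hq
        have hQKne : QK ≠ 0 := hQK ▸ pow_ne_zero _ hq
        rw [hAM, hBM, hQM, hQK]
        have hP2ne : (∏ ν : Fin (m+1), (1 - a * b * QM * x ν)) ≠ 0 := by
          rw [← hQM]; exact hprodα
        rcases Nat.even_or_odd m with hpar | hpar <;> rw [hpar.neg_one_pow] <;>
          (field_simp [ha, hb, hq, hAMne, hBMne, hQMne, hQKne, hP2ne])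
      have hT0 : -(c * q ^ m) / (t0 * ∏ ν : Fin (m+1), x ν)
          = -((a*b*q^m) * (c * q ^ m / ∏ ν : Fin (m+1), x ν)) := by
        rw [ht0]; field_simp
      rw [hTt, hT0] at hsum
      refine mul_left_cancel₀ hαne ?_
      linear_combination hsum
    · have hzero : qPoch (a*b*q^j*t0) q (m+1-j) = 0 := by
        rw [qPoch]
        refine Finset.prod_eq_zero (Finset.mem_range.mpr (show m - j < m+1-j by omega)) ?_
        have hqq : (q:ℂ)^j * q^(m-j) = q^m := by rw [← pow_add]; congr 1; omega
        have h1 : a*b*q^j*t0*q^(m-j) = 1 := by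
          rw [ht0]
          field_simp [left_ne_zero_of_mul hab]
          linear_combination hqq
        rw [h1, sub_self]
      have hT0 : -(c * q ^ (j-1)) / (t0 * ∏ ν : Fin (m+1), x ν)
          = -((a*b*q^m) * (c * q ^ (j-1) / ∏ ν : Fin (m+1), x ν)) := by
        rw [ht0]; field_simp
      rw [hQNeval t0, hzero, mul_zero, zero_div, zero_add, hT0] at hsum
      rw [if_neg hj, zero_mul, zero_div, sub_zero]
      refine mul_left_cancel₀ hαne ?_
      linear_combination hsum
end

section
/- Let n be a positive integer and 1 ≤ k ≤ n. Let W be the n×n matrix whose (i,j) entry is x_i^{j-1} for 1 ≤ j < n, and whose (i,n) entry is -\frac{(x_i - c q^k)(a x_i; q)_{k-1}(a b q^k x_i; q)_{n-k}}{x_i (1 - a b q^{n-1} x_i)}. Then (-1)^{n-1} det W / \prod_{1≤i<j≤n}(x_j - x_i) = \frac{c q^k}{\prod_{l=1}^n x_l} - χ(k=n) · \frac{a^{n-1} q^{(n-1)(n-2)/2} (1 - a b c q^{2n-1})(b q; q)_{n-1}}{\prod_{l=1}^n (1 - a b q^{n-1} x_l)}, assuming the x_i are distinct nonzero and 1 -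 a b q^{n-1} x_i ≠ 0 for all i. -/
open Finset

open Polynomial Matrix

lemma prod_pairs {N : ℕ} (x : Fin N → ℂ) :
    (∏ p ∈ Finset.univ.filter (fun p : Fin N × Fin N => p.1 < p.2), (x p.2 - x p.1))
      = (Matrix.vandermonde x).det := by
  rw [Matrix.det_vandermonde, Finset.prod_filter, ← Finset.univ_product_univ,
    Finset.prod_product]
  refine Finset.prod_congr rfl fun i _ => ?_
  rw [← Finset.prod_filter]
  congr 1
  exact Finset.filter_lt_eq_Ioi

lemma natDeg_prod_le (c : ℕ → ℂ) (M : ℕ) :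
    (∏ i ∈ range M, (1 - C (c i) * X)).natDegree ≤ M := by
  refine le_trans (Polynomial.natDegree_prod_le _ _) ?_
  calc ∑ i ∈ range M, (1 - C (c i) * X).natDegree ≤ ∑ _i ∈ range M, 1 := by
        refine Finset.sum_le_sum fun i _ => ?_
        refine le_trans (Polynomial.natDegree_sub_le _ _) ?_
        simp only [Polynomial.natDegree_one, max_le_iff]
        exact ⟨Nat.zero_le _, le_trans (Polynomial.natDegree_C_mul_le _ _) (by simp)⟩
    _ = M := by simp

lemma coeff_prod_top (c : ℕ → ℂ) (M : ℕ) :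
    (∏ i ∈ range M, (1 - C (c i) * X)).coeff M = ∏ i ∈ range M, (-c i) := by
  induction M with
  | zero => simp
  | succ M ih =>
    rw [Finset.prod_range_succ, Finset.prod_range_succ, ← ih]
    have h1 : (∏ i ∈ range M, (1 - C (c i) * X)) * (1 - C (c M) * X)
        = (∏ i ∈ range M, (1 - C (c i) * X))
          - C (c M) * ((∏ i ∈ range M, (1 - C (c i) * X)) * X) := by ring
    rw [h1, Polynomial.coeff_sub, Polynomial.coeff_C_mul, Polynomial.coeff_mul_X,
      Polynomial.coeff_eq_zero_of_natDegree_lt (lt_of_le_of_lt (natDeg_prod_le c M) (by omega))]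
    ring

lemma det_poly_lastcol {m : ℕ} (x : Fin (m+1) → ℂ) (h : ℂ[X]) (hh : h.natDegree ≤ m) :
    (Matrix.of fun i j : Fin (m+1) =>
      if (j : ℕ) < m then x i ^ (j : ℕ) else h.eval (x i)).det
    = h.coeff m * (Matrix.vandermonde x).det := by
  have hfac : (Matrix.of fun i j : Fin (m+1) =>
      if (j : ℕ) < m then x i ^ (j : ℕ) else h.eval (x i))
      = (Matrix.vandermonde x) * (Matrix.of fun r j : Fin (m+1) =>
          if (j : ℕ) < m then (if r = j then (1:ℂ) else 0) else h.coeff r) := by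
    ext i j
    rw [Matrix.mul_apply]
    simp only [Matrix.of_apply, Matrix.vandermonde_apply]
    by_cases hj : (j : ℕ) < m
    · simp only [hj, if_true]
      rw [Finset.sum_eq_single j]
      · simp
      · intro r _ hr; simp [hr]
      · simp
    · simp only [hj, if_false]
      rw [Polynomial.eval_eq_sum_range' (lt_of_le_of_lt hh (Nat.lt_succ_self m)) (x i),
        ← Fin.sum_univ_eq_sum_range (fun r => h.coeff r * x i ^ r)]
      exact Finset.sum_congr rfl fun r _ => by ring
  rw [hfac, Matrix.det_mul, Matrix.det_vandermonde]
  have htri : ((Matrix.of fun r j : Fin (m+1) =>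
      if (j : ℕ) < m then (if r = j then (1:ℂ) else 0) else h.coeff r)).det
      = h.coeff m := by
    rw [Matrix.det_of_upperTriangular]
    · rw [Fin.prod_univ_castSucc]
      have h1 : ∀ r : Fin m, (Matrix.of fun r j : Fin (m+1) =>
          if (j : ℕ) < m then (if r = j then (1:ℂ) else 0) else h.coeff r)
            r.castSucc r.castSucc = 1 := by
        intro r; simp [r.is_lt]
      rw [Finset.prod_congr rfl (fun r _ => h1 r)]
      simp
    · intro i j hij
      simp only [Matrix.of_apply]
      have : (j : ℕ) < m := by
        have := j.is_lt; have hij' : (j:ℕ) < (i:ℕ) := hij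
        have := i.is_lt; omega
      have : ¬ i = j := by exact fun h' => absurd (congrArg id h') (ne_of_gt hij)
      simp [*]
  rw [htri]; ring

lemma rotate_val {m : ℕ} (j : Fin (m+1)) :
    ((finRotate (m+1) j : Fin (m+1)) : ℕ) = if (j : ℕ) < m then (j : ℕ) + 1 else 0 := by
  rw [finRotate_succ_apply, Fin.val_add_one]
  by_cases hj : j = Fin.last m
  · simp [hj]
  · have : (j : ℕ) < m := by
      have := j.is_lt
      have : (j : ℕ) ≠ m := fun h => hj (Fin.ext h)
      omega
    simp [hj, this]

lemma det_one_lastcol {m : ℕ} (x : Fin (m+1) → ℂ) :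
    (Matrix.of fun i j : Fin (m+1) =>
      if (j : ℕ) < m then x i ^ ((j : ℕ)+1) else 1).det
    = (-1:ℂ)^m * (Matrix.vandermonde x).det := by
  have : (Matrix.of fun i j : Fin (m+1) =>
      if (j : ℕ) < m then x i ^ ((j : ℕ)+1) else 1)
      = (Matrix.vandermonde x).submatrix id (finRotate (m+1)) := by
    ext i j
    simp only [Matrix.of_apply, Matrix.submatrix_apply, id, Matrix.vandermonde_apply,
      rotate_val]
    by_cases hj : (j : ℕ) < m <;> simp [hj]
  rw [this, Matrix.det_permute', sign_finRotate]
  simp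

lemma det_damped_lastcol {m : ℕ} (x : Fin (m+1) → ℂ) (α : ℂ) :
    (Matrix.of fun i j : Fin (m+1) =>
      if (j : ℕ) < m then x i ^ (j : ℕ) * (1 - α * x i) else 1).det
    = α^m * (Matrix.vandermonde x).det := by
  set L : Matrix (Fin (m+1)) (Fin (m+1)) ℂ := Matrix.of fun r d =>
    if (d : ℕ) = 0 then (if (r : ℕ) = 0 then 1 else 0)
    else if (r : ℕ) + 1 = (d : ℕ) then 1 else if r = d then -α else 0 with hL
  have hVL : ∀ (i d : Fin (m+1)), (Matrix.vandermonde x * L) i d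
      = if (d : ℕ) = 0 then 1 else x i ^ ((d : ℕ) - 1) - α * x i ^ (d : ℕ) := by
    intro i d
    rw [Matrix.mul_apply]
    by_cases hd : (d : ℕ) = 0
    · simp only [hd, if_true, hL, Matrix.of_apply, Matrix.vandermonde_apply]
      rw [Finset.sum_eq_single (0 : Fin (m+1))]
      · simp
      · intro r _ hr
        have : (r : ℕ) ≠ 0 := fun h => hr (Fin.ext h)
        simp [hd, this]
      · simp
    · -- d ≥ 1
      have hd1 : (d:ℕ) - 1 < m + 1 := by have := d.is_lt; omega
      have hsum : ∀ r : Fin (m+1), Matrix.vandermonde x i r * L r d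
          = (if r = (⟨(d:ℕ)-1, hd1⟩ : Fin (m+1)) then x i ^ ((d:ℕ)-1) else 0)
            + (if r = d then -α * x i ^ (d:ℕ) else 0) := by
        intro r
        simp only [hL, Matrix.of_apply, Matrix.vandermonde_apply, hd, if_false]
        have hmk : ((⟨(d:ℕ)-1, hd1⟩ : Fin (m+1)) : ℕ) = (d:ℕ)-1 := rfl
        have hdd : ¬ ((⟨(d:ℕ)-1, hd1⟩ : Fin (m+1)) = d) := by
          intro h
          have := congrArg Fin.val h
          rw [hmk] at this
          omega
        have hdd' : ¬ (d = (⟨(d:ℕ)-1, hd1⟩ : Fin (m+1))) := fun h => hdd h.symm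
        have hc1 : (d:ℕ) - 1 + 1 = (d:ℕ) := by omega
        by_cases h1 : (r : ℕ) + 1 = (d : ℕ)
        · have hr : r = (⟨(d:ℕ)-1, hd1⟩ : Fin (m+1)) := Fin.ext (by rw [hmk]; omega)
          have hrd : ¬ r = d := fun h => by rw [h] at h1; omega
          have hx : x i ^ ((d:ℕ)-1) = x i ^ (r:ℕ) := by rw [hr, hmk]
          simp [h1, hr, hrd, ← hx, hc1, hdd]
        · by_cases h2 : r = d
          · have hne : ¬ r = (⟨(d:ℕ)-1, hd1⟩ : Fin (m+1)) := by
              intro h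
              have : (r:ℕ) = (d:ℕ)-1 := by rw [h, hmk]
              apply h1; rw [h2] at this ⊢; omega
            simp [h1, h2, hne, hdd']; ring
          · have hne : ¬ r = (⟨(d:ℕ)-1, hd1⟩ : Fin (m+1)) := by
              intro h; apply h1
              have : (r : ℕ) = (d:ℕ)-1 := by rw [h, hmk]
              omega
            simp [h1, h2, hne, hdd']
      rw [Finset.sum_congr rfl (fun r _ => hsum r), Finset.sum_add_distrib,
        Finset.sum_ite_eq' , Finset.sum_ite_eq']
      simp [hd]
      ring
  have hfac : (Matrix.of fun i j : Fin (m+1) =>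
      if (j : ℕ) < m then x i ^ (j : ℕ) * (1 - α * x i) else 1)
      = (Matrix.vandermonde x * L).submatrix id (finRotate (m+1)) := by
    ext i j
    simp only [Matrix.of_apply, Matrix.submatrix_apply, id]
    rw [hVL]
    rw [finRotate_succ_apply] at *
    have hval : ((j + 1 : Fin (m+1)) : ℕ) = if (j : ℕ) < m then (j : ℕ) + 1 else 0 := by
      rw [← finRotate_succ_apply, rotate_val]
    by_cases hj : (j : ℕ) < m
    · have h0 : ((j+1 : Fin (m+1)) : ℕ) = (j:ℕ)+1 := by rw [hval]; simp [hj]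
      simp only [h0]
      simp only [Nat.succ_ne_zero, if_false, Nat.add_sub_cancel, hj, if_true]
      ring
    · have h0 : ((j+1 : Fin (m+1)) : ℕ) = 0 := by rw [hval]; simp [hj]
      simp [h0, hj]
  rw [hfac, Matrix.det_permute', sign_finRotate, Matrix.det_mul, Matrix.det_of_upperTriangular
    (M := L)]
  · have hdiag : ∀ r : Fin (m+1), L r r = if (r:ℕ) = 0 then 1 else -α := by
      intro r
      simp only [hL, Matrix.of_apply]
      by_cases h : (r:ℕ) = 0 <;> simp [h]
    rw [Finset.prod_congr rfl (fun r _ => hdiag r)]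
    rw [Fin.prod_univ_succ]
    simp only [Fin.val_zero, if_true]
    have : ∀ r : Fin m, (if ((r.succ : Fin (m+1)) : ℕ) = 0 then (1:ℂ) else -α) = -α := by
      intro r; simp [Fin.val_succ]
    rw [Finset.prod_congr rfl (fun r _ => this r)]
    simp only [Finset.prod_const, Finset.card_univ, Fintype.card_fin, one_mul]
    have hsign : ((-1:ℂ))^(m*2) = 1 := by rw [mul_comm, pow_mul]; norm_num
    push_cast
    rw [neg_pow α m]
    ring_nf
    rw [hsign]
    ring
  · intro i j hij
    have hij' : (j : ℕ) < (i : ℕ) := hij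
    simp only [hL, Matrix.of_apply]
    have h1 : ¬ ((i:ℕ) + 1 = (j:ℕ)) := by omega
    have h2 : ¬ i = j := fun h => by rw [h] at hij'; omega
    by_cases h0 : (j:ℕ) = 0
    · have : ¬ (i:ℕ) = 0 := by omega
      simp [h0, this]
    · simp [h0, h1, h2]

lemma decomp (m k : ℕ) (hk1 : 1 ≤ k) (hk2 : k ≤ m+1) (a b c q : ℂ) :
    ∃ (B' : ℂ) (h : ℂ[X]), h.natDegree ≤ m ∧
      (C (c*q^k) - X) * (∏ i ∈ range m,
          (1 - C (if i < k-1 then a*q^i else a*b*q^(k+(i-(k-1)))) * X))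
        = C (c*q^k) * (1 - C (a*b*q^m) * X) + C B' * X
            + X * (1 - C (a*b*q^m) * X) * h ∧
      ∀ Pi : ℂ, (a*b*q^m = 0 → Pi = 1) →
        (-1:ℂ)^m * B' * (a*b*q^m)^m + (-1:ℂ)^m * h.coeff m * Pi
          = - ((if k = m+1 then (1:ℂ) else 0)
              * (a^m * q^(m*(m-1)/2) * (1 - a*b*c*q^(2*(m+1)-1))
                  * ∏ i ∈ range m, (1 - (b*q)*q^i))) := by
  set cs : ℕ → ℂ := fun i => if i < k-1 then a*q^i else a*b*q^(k+(i-(k-1))) with hcs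
  set e : ℂ := c*q^k with he
  set P : ℂ[X] := ∏ i ∈ range m, (1 - C (cs i) * X) with hP
  set g : ℂ[X] := (C e - X) * P with hg
  have hPdeg : P.natDegree ≤ m := natDeg_prod_le _ _
  have hgdeg : g.natDegree ≤ m + 1 := by
    refine le_trans (Polynomial.natDegree_mul_le) ?_
    have : (C e - X).natDegree ≤ 1 := by
      refine le_trans (Polynomial.natDegree_sub_le _ _) ?_
      simp
    omega
  have hg0 : g.eval 0 = e := by
    simp only [hg, Polynomial.eval_mul, Polynomial.eval_sub, Polynomial.eval_C,
      Polynomial.eval_X, hP, Polynomial.eval_prod]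
    simp
  by_cases hα : a*b*q^m = 0
  · -- degenerate case
    have hXdvd : X ∣ (g - C e) := by
      rw [Polynomial.X_dvd_iff]
      simp [Polynomial.coeff_zero_eq_eval_zero, hg0]
    obtain ⟨h, hh⟩ := hXdvd
    refine ⟨0, h, ?_, ?_, ?_⟩
    · by_cases h0 : h = 0
      · simp [h0]
      · have : (X * h).natDegree = 1 + h.natDegree := by
          rw [Polynomial.natDegree_mul Polynomial.X_ne_zero h0]
          simp
        have h2 : (g - C e).natDegree ≤ m + 1 := by
          refine le_trans (Polynomial.natDegree_sub_le _ _) ?_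
          simp [hgdeg]
        rw [← hh] at this
        omega
    · rw [hα]
      simp only [map_zero, zero_mul, sub_zero, mul_one]
      linear_combination hh
    · intro Pi hPi
      rw [hPi hα]
      have hcoeff : h.coeff m = g.coeff (m+1) := by
        have : (X * h).coeff (m+1) = (g - C e).coeff (m+1) := by rw [hh]
        rw [Polynomial.coeff_X_mul, Polynomial.coeff_sub, Polynomial.coeff_C] at this
        simpa using this
      have hgc : g.coeff (m+1) = - P.coeff m := by
        have : g = C e * P - X * P := by rw [hg]; ring
        rw [this, Polynomial.coeff_sub, Polynomial.coeff_C_mul, Polynomial.coeff_X_mul,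
          Polynomial.coeff_eq_zero_of_natDegree_lt (lt_of_le_of_lt hPdeg (by omega))]
        ring
      have hPc : P.coeff m = (-1:ℂ)^m * ∏ i ∈ range m, cs i := by
        rw [hP, coeff_prod_top]
        rw [show (∏ i ∈ range m, (- cs i)) = ∏ i ∈ range m, ((-1) * cs i) by
          refine Finset.prod_congr rfl fun i _ => by ring]
        rw [Finset.prod_mul_distrib]
        simp
      rw [hcoeff, hgc, hPc]
      have hmain : (∏ i ∈ range m, cs i)
          = (if k = m+1 then (1:ℂ) else 0)
              * (a^m * q^(m*(m-1)/2) * (1 - a*b*c*q^(2*(m+1)-1))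
                  * ∏ i ∈ range m, (1 - (b*q)*q^i)) := by
        by_cases hkm : k = m+1
        · rw [if_pos hkm]
          have hcs' : ∀ i ∈ range m, cs i = a * q^i := by
            intro i hi
            rw [Finset.mem_range] at hi
            have : i < k - 1 := by omega
            simp [hcs, this]
          rw [Finset.prod_congr rfl hcs', Finset.prod_mul_distrib, Finset.prod_const,
            Finset.prod_pow_eq_pow_sum, Finset.sum_range_id, Finset.card_range]
          rcases mul_eq_zero.mp hα with hab | hqm
          · rcases mul_eq_zero.mp hab with ha | hb
            · by_cases hm : m = 0
              · subst hm; simp [ha]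
              · rw [ha, zero_pow hm]; ring
            · rw [hb]
              have : ∀ i ∈ range m, (1 - (0:ℂ)*q*q^i) = 1 := fun i _ => by ring
              rw [Finset.prod_congr rfl this, Finset.prod_const_one]
              ring
          · have hq : q = 0 := by
              rcases pow_eq_zero_iff'.mp hqm with ⟨hq, _⟩
              exact hq
            have hm : m ≠ 0 := by
              intro h; rw [h] at hqm; simp at hqm
            rw [hq]
            have h1 : ∀ i ∈ range m, (1 - b*(0:ℂ)*(0:ℂ)^i) = 1 := fun i _ => by ring
            rw [Finset.prod_congr rfl h1, Finset.prod_const_one,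
              zero_pow (show 2*(m+1)-1 ≠ 0 by omega)]
            ring
        · rw [if_neg hkm, zero_mul]
          refine Finset.prod_eq_zero (Finset.mem_range.mpr (show k-1 < m by omega)) ?_
          have : ¬ (k-1 < k-1) := lt_irrefl _
          simp only [hcs, this, if_false]
          have : k - 1 - (k-1) = 0 := by omega
          rw [this, Nat.add_zero]
          rcases mul_eq_zero.mp hα with hab | hqm
          · rcases mul_eq_zero.mp hab with ha | hb
            · rw [ha]; ring
            · rw [hb]; ring
          · have hq : q = 0 := by
              rcases pow_eq_zero_iff'.mp hqm with ⟨hq, _⟩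
              exact hq
            rw [hq, zero_pow (show k ≠ 0 by omega)]
            ring
      rw [hmain]
      have hsq : ((-1:ℂ))^m * (-1)^m = 1 := by
        rw [← pow_add]
        exact Even.neg_one_pow ⟨m, rfl⟩
      set T : ℂ := (if k = m+1 then (1:ℂ) else 0)
              * (a^m * q^(m*(m-1)/2) * (1 - a*b*c*q^(2*(m+1)-1))
                  * ∏ i ∈ range m, (1 - (b*q)*q^i)) with hT
      linear_combination (-T) * hsq
  · -- main case
    have hαinv : (a*b*q^m) * (a*b*q^m)⁻¹ = 1 := mul_inv_cancel₀ hα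
    set α : ℂ := a*b*q^m with hαdef
    have hgα : α^(m+1) * g.eval α⁻¹ = (α*e - 1) * ∏ i ∈ range m, (α - cs i) := by
      rw [hg, Polynomial.eval_mul, Polynomial.eval_sub, Polynomial.eval_C, Polynomial.eval_X,
        hP, Polynomial.eval_prod]
      have hfac : ∏ i ∈ range m, (α - cs i)
          = α^m * ∏ i ∈ range m, Polynomial.eval α⁻¹ (1 - C (cs i) * X) := by
        have h1 : ∀ i ∈ range m, (α - cs i) = α * Polynomial.eval α⁻¹ (1 - C (cs i) * X) := by
          intro i _
          simp only [Polynomial.eval_sub, Polynomial.eval_one, Polynomial.eval_mul,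
            Polynomial.eval_C, Polynomial.eval_X]
          field_simp
        rw [Finset.prod_congr rfl h1, Finset.prod_mul_distrib, Finset.prod_const,
          Finset.card_range]
      rw [hfac]
      have : α^(m+1) = α * α^m := by ring
      rw [this]
      have h2 : α * (e - α⁻¹) = α * e - 1 := by
        rw [mul_sub]
        rw [mul_inv_cancel₀ hα]
      linear_combination (α^m * ∏ i ∈ range m, Polynomial.eval α⁻¹ (1 - C (cs i) * X)) * h2
    -- construct the decomposition
    set B' : ℂ := α * g.eval α⁻¹ with hB'
    set r : ℂ[X] := g - C e * (1 - C α * X) - C B' * X with hrdef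
    have hr0 : r.coeff 0 = 0 := by
      rw [Polynomial.coeff_zero_eq_eval_zero]
      simp only [hrdef, Polynomial.eval_sub, Polynomial.eval_mul, Polynomial.eval_C,
        Polynomial.eval_one, Polynomial.eval_X, hg0]
      ring
    have hrα : r.IsRoot α⁻¹ := by
      show Polynomial.eval α⁻¹ r = 0
      simp only [hrdef, Polynomial.eval_sub, Polynomial.eval_mul, Polynomial.eval_C,
        Polynomial.eval_one, Polynomial.eval_X, hB']
      linear_combination (e - Polynomial.eval α⁻¹ g) * hαinv
    have hXsub_ne : (X - C α⁻¹ : ℂ[X]) ≠ 0 := Polynomial.X_sub_C_ne_zero α⁻¹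
    have hcop : IsCoprime (X : ℂ[X]) (X - C α⁻¹) := by
      have h0 : ((0:ℂ) - α⁻¹) ≠ 0 := by
        rw [zero_sub, neg_ne_zero]
        exact inv_ne_zero hα
      have := Polynomial.isCoprime_X_sub_C_of_isUnit_sub (isUnit_iff_ne_zero.mpr h0)
      simpa using this
    have hdvd : X * (X - C α⁻¹) ∣ r :=
      hcop.mul_dvd (Polynomial.X_dvd_iff.mpr hr0) (Polynomial.dvd_iff_isRoot.mpr hrα)
    obtain ⟨s, hs⟩ := hdvd
    have hbound : s ≠ 0 → 2 + s.natDegree ≤ m + 1 := by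
      intro hs0
      have hdeg_r : r.natDegree = 2 + s.natDegree := by
        rw [hs, Polynomial.natDegree_mul (mul_ne_zero Polynomial.X_ne_zero hXsub_ne) hs0,
          Polynomial.natDegree_mul Polynomial.X_ne_zero hXsub_ne,
          Polynomial.natDegree_X, Polynomial.natDegree_X_sub_C]
      have hlin : (1 - C α * X : ℂ[X]).natDegree ≤ 1 := by
        refine le_trans (Polynomial.natDegree_sub_le _ _) ?_
        simp only [Polynomial.natDegree_one, max_le_iff]
        exact ⟨Nat.zero_le _, le_trans (Polynomial.natDegree_C_mul_le _ _) (by simp)⟩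
      have hr_le : r.natDegree ≤ m + 1 := by
        rw [hrdef]
        refine le_trans (Polynomial.natDegree_sub_le _ _) ?_
        rw [max_le_iff]
        constructor
        · refine le_trans (Polynomial.natDegree_sub_le _ _) ?_
          rw [max_le_iff]
          refine ⟨hgdeg, ?_⟩
          refine le_trans (Polynomial.natDegree_mul_le) ?_
          simp only [Polynomial.natDegree_C, zero_add]
          omega
        · refine le_trans (Polynomial.natDegree_mul_le) ?_
          simp only [Polynomial.natDegree_C, Polynomial.natDegree_X]
          omega
      omega
    refine ⟨B', C (-α⁻¹) * s, ?_, ?_, ?_⟩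
    · by_cases hs0 : s = 0
      · simp [hs0]
      · refine le_trans (Polynomial.natDegree_C_mul_le _ _) ?_
        have := hbound hs0
        omega
    · have hCα : (C α : ℂ[X]) * C α⁻¹ = 1 := by
        rw [← Polynomial.C_mul, hαinv, Polynomial.C_1]
      have hCneg : (C (-α⁻¹) : ℂ[X]) = - C α⁻¹ := by
        rw [map_neg]
      rw [hCneg]
      linear_combination hs - X^2 * s * hCα
    · intro Pi hPi
      have hc0 : (C (-α⁻¹) * s).coeff m = 0 := by
        by_cases hs0 : s = 0
        · simp [hs0]
        · refine Polynomial.coeff_eq_zero_of_natDegree_lt ?_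
          refine lt_of_le_of_lt (Polynomial.natDegree_C_mul_le _ _) ?_
          have := hbound hs0
          omega
      rw [hc0]
      have hBα : B' * α^m = (α*e - 1) * ∏ i ∈ range m, (α - cs i) := by
        rw [hB', ← hgα]; ring
      by_cases hkm : k = m+1
      · have h1 : ∀ i ∈ range m, α - cs i = ((-a) * q^i) * (1 - (b*q)*q^(m-1-i)) := by
          intro i hi
          rw [Finset.mem_range] at hi
          have hlt : i < k - 1 := by omega
          simp only [hcs, hlt, if_true]
          have hqq : q^i * q^(m-i) = q^m := by rw [← pow_add]; congr 1; omega
          have hq2 : q * q^(m-1-i) = q^(m-i) := by rw [← pow_succ']; congr 1; omega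
          rw [hαdef]
          linear_combination (-(a*b))*hqq - (a*q^i*b)*hq2
        have h2 : ∏ i ∈ range m, ((-a) * q^i) = (-1:ℂ)^m * a^m * q^(m*(m-1)/2) := by
          rw [Finset.prod_mul_distrib, Finset.prod_const, Finset.card_range,
            Finset.prod_pow_eq_pow_sum, Finset.sum_range_id, neg_pow]
        have h3 : ∏ i ∈ range m, (1 - (b*q)*q^(m-1-i)) = ∏ i ∈ range m, (1 - (b*q)*q^i) :=
          Finset.prod_range_reflect (fun j => 1 - (b*q)*q^j) m
        have hprod : ∏ i ∈ range m, (α - cs i)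
            = (-1:ℂ)^m * a^m * q^(m*(m-1)/2) * ∏ i ∈ range m, (1 - (b*q)*q^i) := by
          rw [Finset.prod_congr rfl h1, Finset.prod_mul_distrib, h2, h3]
        have hαe : α * e = a*b*c*q^(2*(m+1)-1) := by
          rw [hαdef, he, hkm]
          have : q^m * q^(m+1) = q^(2*(m+1)-1) := by rw [← pow_add]; congr 1; omega
          linear_combination a*b*c*this
        have hsq : ((-1:ℂ))^m * (-1)^m = 1 := by
          rw [← pow_add]
          exact Even.neg_one_pow ⟨m, rfl⟩
        rw [if_pos hkm]
        set Qb : ℂ := ∏ i ∈ range m, (1 - (b*q)*q^i) with hQb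
        set Xv : ℂ := a^m * q^(m*(m-1)/2) * Qb with hXv
        have hBB : B' * α^m = (α*e - 1) * ((-1:ℂ)^m * Xv) := by
          rw [hBα, hprod, hXv]; ring
        linear_combination ((-1:ℂ))^m * hBB + ((α*e-1) * Xv) * hsq + Xv * hαe
      · rw [if_neg hkm]
        have hm1 : 1 ≤ m := by omega
        have hzero : α - cs (m-1) = 0 := by
          have h1 : ¬ (m-1 < k-1) := by omega
          simp only [hcs, h1, if_false]
          have h2 : k + (m-1-(k-1)) = m := by omega
          rw [h2, hαdef]
          ring
        have : ∏ i ∈ range m, (α - cs i) = 0 :=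
          Finset.prod_eq_zero (Finset.mem_range.mpr (by omega)) hzero
        rw [this] at hBα
        have hB0 : B' * α^m = 0 := by rw [hBα]; ring
        linear_combination ((-1:ℂ))^m * hB0

theorem vandermonde_type_determinant_W
    (n : ℕ) (hn : 1 ≤ n) (k : ℕ) (hk1 : 1 ≤ k) (hk2 : k ≤ n)
    (a b c q : ℂ)
    (x : Fin n → ℂ) (hx0 : ∀ i, x i ≠ 0) (hxd : Function.Injective x)
    (habx : ∀ i, 1 - a * b * q ^ (n-1) * x i ≠ 0) :
    (-1 : ℂ) ^ (n-1)
      * (Matrix.of fun i j : Fin n =>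
          if j.val + 1 < n then x i ^ j.val
          else -((x i - c * q ^ k) * qPoch (a * x i) q (k-1)
                  * qPoch (a * b * q ^ k * x i) q (n-k))
                / (x i * (1 - a * b * q ^ (n-1) * x i))).det
      / (∏ p ∈ Finset.univ.filter (fun p : Fin n × Fin n => p.1 < p.2), (x p.2 - x p.1))
      = c * q ^ k / (∏ l, x l)
        - (if k = n then 1 else 0)
          * (a ^ (n-1) * q ^ ((n-1)*(n-2)/2) * (1 - a * b * c * q ^ (2*n-1))
              * qPoch (b*q) q (n-1))
          / (∏ l, (1 - a * b * q ^ (n-1) * x l)) := by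
  obtain ⟨m, rfl⟩ : ∃ m, n = m + 1 := ⟨n - 1, by omega⟩
  have hk2' : k ≤ m + 1 := hk2
  simp only [Nat.add_sub_cancel, Nat.add_lt_add_iff_right] at habx ⊢
  have he2 : m + 1 - 2 = m - 1 := by omega
  rw [he2]
  obtain ⟨B', h, hdeg, hdecomp, hkey⟩ := decomp m k hk1 hk2' a b c q
  -- notation
  set α : ℂ := a*b*q^m with hα
  set e : ℂ := c*q^k with he
  set V : ℂ := (Matrix.vandermonde x).det with hV
  rw [prod_pairs x, ← hV]
  have hVne : V ≠ 0 := by rw [hV]; exact Matrix.det_vandermonde_ne_zero_iff.mpr hxd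
  have hPx : (∏ l, x l) ≠ 0 := Finset.prod_ne_zero_iff.mpr (fun i _ => hx0 i)
  have hPd : (∏ l, (1 - α * x l)) ≠ 0 := Finset.prod_ne_zero_iff.mpr (fun i _ => habx i)
  -- eval of the decomposition
  have heval : ∀ z : ℂ, (e - z) * (qPoch (a*z) q (k-1) * qPoch (a*b*q^k*z) q (m+1-k))
      = e*(1 - α*z) + B'*z + z*(1-α*z)*h.eval z := by
    intro z
    have h0 := congrArg (Polynomial.eval z) hdecomp
    simp only [Polynomial.eval_add, Polynomial.eval_mul, Polynomial.eval_sub, Polynomial.eval_C,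
      Polynomial.eval_X, Polynomial.eval_one, Polynomial.eval_prod] at h0
    rw [← h0]
    congr 1
    have hsplitm : ∀ (f : ℕ → ℂ), ∏ i ∈ range m, f i
        = (∏ i ∈ range (k-1), f i) * ∏ i ∈ range (m+1-k), f ((k-1)+i) := by
      intro f
      have hm : (k-1) + (m+1-k) = m := by omega
      rw [← Finset.prod_range_add, hm]
    rw [hsplitm]
    unfold qPoch
    congr 1
    · refine Finset.prod_congr rfl fun i hi => ?_
      rw [Finset.mem_range] at hi
      simp only [Polynomial.eval_sub, Polynomial.eval_one, Polynomial.eval_mul,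
        Polynomial.eval_C, Polynomial.eval_X, hi, if_pos]
      ring
    · refine Finset.prod_congr rfl fun i hi => ?_
      have h1 : ¬ (k - 1 + i < k - 1) := by omega
      have h2 : k - 1 + i - (k-1) = i := by omega
      simp only [Polynomial.eval_sub, Polynomial.eval_one, Polynomial.eval_mul,
        Polynomial.eval_C, Polynomial.eval_X, h1, if_false, h2]
      rw [pow_add]
      ring
  -- base matrix and updateColumn representation
  have hZdet : ∀ w : Fin (m+1) → ℂ,
      (Matrix.of fun i j : Fin (m+1) =>
        if (j:ℕ) < m then (x i * (1 - α*x i)) * x i ^ (j:ℕ) else w i)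
      = (Matrix.of fun i j : Fin (m+1) =>
          if (j:ℕ) < m then (x i * (1 - α*x i)) * x i ^ (j:ℕ)
          else (0:ℂ)).updateCol (Fin.last m) w := by
    intro w
    ext i j
    rw [Matrix.updateCol_apply]
    by_cases hj : j = Fin.last m
    · rw [if_pos hj, hj]
      simp [Fin.val_last]
    · rw [if_neg hj]
      have hjm : (j:ℕ) < m := Fin.val_lt_last hj
      simp [hjm]
  have hD1 : (Matrix.of fun i j : Fin (m+1) =>
      if (j:ℕ) < m then (x i * (1 - α*x i)) * x i ^ (j:ℕ) else (1 - α*x i)).det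
      = (∏ l, (1 - α*x l)) * ((-1:ℂ)^m * V) := by
    have hm : (Matrix.of fun i j : Fin (m+1) =>
        if (j:ℕ) < m then (x i * (1 - α*x i)) * x i ^ (j:ℕ) else (1 - α*x i))
        = (Matrix.of fun i j : Fin (m+1) => (1 - α*x i) *
            (Matrix.of fun i j : Fin (m+1) =>
              if (j:ℕ) < m then x i ^ ((j:ℕ)+1) else 1) i j) := by
      ext i j
      simp only [Matrix.of_apply]
      by_cases hj : (j:ℕ) < m
      · simp only [hj, if_true]; ring
      · simp only [hj, if_false]; ring
    rw [hm, Matrix.det_mul_column, det_one_lastcol, hV]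
  have hD2 : (Matrix.of fun i j : Fin (m+1) =>
      if (j:ℕ) < m then (x i * (1 - α*x i)) * x i ^ (j:ℕ) else x i).det
      = (∏ l, x l) * (α^m * V) := by
    have hm : (Matrix.of fun i j : Fin (m+1) =>
        if (j:ℕ) < m then (x i * (1 - α*x i)) * x i ^ (j:ℕ) else x i)
        = (Matrix.of fun i j : Fin (m+1) => x i *
            (Matrix.of fun i j : Fin (m+1) =>
              if (j:ℕ) < m then x i ^ (j:ℕ) * (1 - α * x i) else 1) i j) := by
      ext i j
      simp only [Matrix.of_apply]
      by_cases hj : (j:ℕ) < m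
      · simp only [hj, if_true]; ring
      · simp only [hj, if_false]; ring
    rw [hm, Matrix.det_mul_column, det_damped_lastcol, hV]
  have hD3 : (Matrix.of fun i j : Fin (m+1) =>
      if (j:ℕ) < m then (x i * (1 - α*x i)) * x i ^ (j:ℕ)
      else (x i * (1 - α*x i)) * h.eval (x i)).det
      = (∏ l, (x l * (1 - α*x l))) * (h.coeff m * V) := by
    have hm : (Matrix.of fun i j : Fin (m+1) =>
        if (j:ℕ) < m then (x i * (1 - α*x i)) * x i ^ (j:ℕ)
        else (x i * (1 - α*x i)) * h.eval (x i))
        = (Matrix.of fun i j : Fin (m+1) => (x i * (1 - α*x i)) *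
            (Matrix.of fun i j : Fin (m+1) =>
              if (j:ℕ) < m then x i ^ (j:ℕ) else h.eval (x i)) i j) := by
      ext i j
      simp only [Matrix.of_apply]
      by_cases hj : (j:ℕ) < m
      · simp only [hj, if_true]
      · simp only [hj, if_false]
    rw [hm, Matrix.det_mul_column, det_poly_lastcol x h hdeg, hV]
  have hdet3 : (Matrix.of fun i j : Fin (m+1) =>
      if (j:ℕ) < m then (x i * (1 - α*x i)) * x i ^ (j:ℕ)
      else e*(1-α*x i) + B'*(x i) + (x i*(1-α*x i))*h.eval (x i)).det
      = e * ((∏ l, (1-α*x l)) * ((-1:ℂ)^m * V)) + B' * ((∏ l, x l) * (α^m * V))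
        + (∏ l, (x l * (1-α*x l))) * (h.coeff m * V) := by
    rw [hZdet]
    have hw : (fun i => e*(1-α*x i) + B'*(x i) + (x i*(1-α*x i))*h.eval (x i))
        = (e • fun i => (1-α*x i)) + ((B' • fun i => x i)
            + fun i => (x i*(1-α*x i))*h.eval (x i)) := by
      funext i
      simp only [Pi.add_apply, Pi.smul_apply, smul_eq_mul]
      ring
    rw [hw, Matrix.det_updateCol_add, Matrix.det_updateCol_smul,
      Matrix.det_updateCol_add, Matrix.det_updateCol_smul,
      ← hZdet, ← hZdet, ← hZdet, hD1, hD2, hD3]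
    ring
  -- row scaling of the goal matrix
  have h1 := Matrix.det_mul_column (fun i => x i * (1 - α*x i))
      (Matrix.of fun i j : Fin (m+1) =>
        if (j:ℕ) < m then x i ^ (j:ℕ)
        else -((x i - e) * qPoch (a * x i) q (k-1) * qPoch (a*b*q^k * x i) q (m+1-k))
              / (x i * (1 - α * x i)))
  have h2 : (Matrix.of fun i j : Fin (m+1) => (x i * (1 - α*x i)) *
      (Matrix.of fun i j : Fin (m+1) =>
        if (j:ℕ) < m then x i ^ (j:ℕ)
        else -((x i - e) * qPoch (a * x i) q (k-1) * qPoch (a*b*q^k * x i) q (m+1-k))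
              / (x i * (1 - α * x i))) i j)
      = (Matrix.of fun i j : Fin (m+1) =>
        if (j:ℕ) < m then (x i * (1 - α*x i)) * x i ^ (j:ℕ)
        else e*(1-α*x i) + B'*(x i) + (x i*(1-α*x i))*h.eval (x i)) := by
    ext i j
    simp only [Matrix.of_apply]
    by_cases hj : (j:ℕ) < m
    · simp only [hj, if_true]
    · simp only [hj, if_false]
      have hne : x i * (1 - α * x i) ≠ 0 := mul_ne_zero (hx0 i) (habx i)
      rw [mul_comm, div_mul_cancel₀ _ hne, ← heval (x i)]
      ring
  rw [h2, hdet3] at h1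
  have key := hkey (∏ l, (1 - α*x l)) (fun h0 => by rw [hα] at h0 ⊢; rw [h0]; simp)
  rw [show (∏ i ∈ range m, (1 - (b*q)*q^i)) = qPoch (b*q) q m from rfl] at key
  rw [div_sub_div _ _ hPx hPd, div_eq_div_iff hVne (mul_ne_zero hPx hPd)]
  have hPP : (∏ l, (x l * (1 - α*x l))) = (∏ l, x l) * (∏ l, (1 - α*x l)) :=
    Finset.prod_mul_distrib
  rw [hPP] at h1
  have hsq : ((-1:ℂ))^m * (-1)^m = 1 := by
    rw [← pow_add]
    exact Even.neg_one_pow ⟨m, rfl⟩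
  linear_combination (-((-1:ℂ))^m) * h1 + ((∏ l, x l) * V) * key
    + (e * (∏ l, (1 - α*x l)) * V) * hsq
end

section
/- Let n be a positive integer and Y_n(q) the n×n lower triangular matrix with (i,j) entry (-1)^{i+j} q^{-(i-j)(2n+1-i-j)/2} [n-j choose i-j]_q. Then the inverse of Y_n(q) is the matrix with (i,j) entry q^{(j-i)(n+1-i)} [n-j choose i-j]_q. -/
open Finset

/-- Gaussian binomial coefficient, via the q-Pascal recurrence. -/
noncomputable def qbinom (q : ℂ) : ℕ → ℕ → ℂ
  | _, 0 => 1
  | 0, _+1 => 0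
  | m+1, r+1 => qbinom q m r + q ^ (r+1) * qbinom q m (r+1)

/-- Gaussian binomial coefficient with integer arguments, zero when `r < 0` or `r > m`. -/
noncomputable def qbinomZ (q : ℂ) (m r : ℤ) : ℂ :=
  if 0 ≤ r ∧ r ≤ m then qbinom q m.toNat r.toNat else 0

lemma qbinom_zero (q : ℂ) (m : ℕ) : qbinom q m 0 = 1 := by cases m <;> rfl

lemma qbinom_succ (q : ℂ) (m r : ℕ) :
    qbinom q (m+1) (r+1) = qbinom q m r + q ^ (r+1) * qbinom q m (r+1) := rfl

lemma qbinom_eq_zero (q : ℂ) : ∀ m r, m < r → qbinom q m r = 0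
  | 0, _+1, _ => rfl
  | m+1, r+1, h => by
      rw [qbinom_succ, qbinom_eq_zero q m r (by omega), qbinom_eq_zero q m (r+1) (by omega)]
      ring

lemma qbinom_self (q : ℂ) : ∀ m, qbinom q m m = 1
  | 0 => rfl
  | m+1 => by rw [qbinom_succ, qbinom_self q m, qbinom_eq_zero q m (m+1) (by omega)]; ring

noncomputable def qbinomP : ℕ → ℕ → Polynomial ℂ
  | _, 0 => 1
  | 0, _+1 => 0
  | m+1, r+1 => qbinomP m r + Polynomial.X ^ (r+1) * qbinomP m (r+1)

lemma qbinomP_zero (m : ℕ) : qbinomP m 0 = 1 := by cases m <;> rfl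

lemma qbinomP_succ (m r : ℕ) :
    qbinomP (m+1) (r+1) = qbinomP m r + Polynomial.X ^ (r+1) * qbinomP m (r+1) := rfl

lemma qbinomP_eq_zero : ∀ m r, m < r → qbinomP m r = 0
  | 0, _+1, _ => rfl
  | m+1, r+1, h => by
      rw [qbinomP_succ, qbinomP_eq_zero m r (by omega), qbinomP_eq_zero m (r+1) (by omega)]
      ring

lemma qbinomP_self : ∀ m, qbinomP m m = 1
  | 0 => rfl
  | m+1 => by rw [qbinomP_succ, qbinomP_self m, qbinomP_eq_zero m (m+1) (by omega)]; ring

lemma qbinomP_eval (q : ℂ) : ∀ m r, (qbinomP m r).eval q = qbinom q m r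
  | m, 0 => by rw [qbinomP_zero, qbinom_zero, Polynomial.eval_one]
  | 0, r+1 => by show (0 : Polynomial ℂ).eval q = 0; simp
  | m+1, r+1 => by
      rw [qbinomP_succ, qbinom_succ]
      simp [qbinomP_eval q m r, qbinomP_eval q m (r+1)]

noncomputable def qint (k : ℕ) : Polynomial ℂ := ∑ i ∈ range k, Polynomial.X ^ i

noncomputable def qfact : ℕ → Polynomial ℂ
  | 0 => 1
  | k+1 => qfact k * qint (k+1)

lemma qfact_succ (k : ℕ) : qfact (k+1) = qfact k * qint (k+1) := rfl

lemma qint_add (a b : ℕ) : qint (a+b) = qint a + Polynomial.X ^ a * qint b := by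
  simp [qint, Finset.sum_range_add, Finset.mul_sum, pow_add]

lemma qint_eval0 (k : ℕ) : (qint (k+1)).eval 0 = 1 := by
  simp [qint, Polynomial.eval_finset_sum, Finset.sum_range_succ']

lemma qfact_ne_zero : ∀ k, qfact k ≠ 0 := by
  have h : ∀ k, (qfact k).eval 0 = 1 := by
    intro k
    induction k with
    | zero => simp [qfact]
    | succ k ih => rw [qfact_succ, Polynomial.eval_mul, ih, qint_eval0]; ring
  intro k hk
  have := h k
  rw [hk] at this
  simp at this

lemma qbinomP_mul_qfact : ∀ m r, r ≤ m → qbinomP m r * (qfact r * qfact (m - r)) = qfact m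
  | m, 0, _ => by simp [qbinomP_zero, qfact]
  | 0, r+1, h => by omega
  | m+1, r+1, h => by
    rcases Nat.lt_or_ge r m with hr | hr
    · have h1 := qbinomP_mul_qfact m r (by omega)
      have h2 := qbinomP_mul_qfact m (r+1) (by omega)
      have key := qint_add (r+1) (m-r)
      rw [show r+1+(m-r) = m+1 by omega] at key
      have e2 : qfact (m - r) = qfact (m - (r+1)) * qint (m - r) := by
        rw [show m - r = (m - (r+1)) + 1 by omega, qfact_succ, show m - (r+1) + 1 = m - r by omega]
      rw [e2] at h1
      rw [qfact_succ r] at h2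
      rw [show m + 1 - (r+1) = m - r by omega, e2, qbinomP_succ, qfact_succ m, qfact_succ r]
      linear_combination (qint (r+1)) * h1 + (Polynomial.X^(r+1) * qint (m-r)) * h2 - qfact m * key
    · have : r = m := by omega
      subst this
      simp [qbinomP_self, qfact]

lemma trinom_P (m d t : ℕ) (ht : t ≤ d) (hd : d ≤ m) :
    qbinomP m t * qbinomP (m-t) (d-t) = qbinomP m d * qbinomP d t := by
  have hc : qfact t * qfact (d-t) * qfact (m-d) ≠ 0 :=
    mul_ne_zero (mul_ne_zero (qfact_ne_zero _) (qfact_ne_zero _)) (qfact_ne_zero _)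
  apply mul_right_cancel₀ hc
  have h1 := qbinomP_mul_qfact m t (le_trans ht hd)
  have h2 := qbinomP_mul_qfact (m-t) (d-t) (by omega)
  have h3 := qbinomP_mul_qfact m d hd
  have h4 := qbinomP_mul_qfact d t ht
  rw [show m - t - (d-t) = m - d by omega] at h2
  linear_combination (qbinomP m t * qfact t) * h2 + h1 - (qbinomP m d * qfact (m-d)) * h4 - h3

lemma trinom (q : ℂ) (m d t : ℕ) (ht : t ≤ d) (hd : d ≤ m) :
    qbinom q m t * qbinom q (m-t) (d-t) = qbinom q m d * qbinom q d t := by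
  have h := congrArg (Polynomial.eval q) (trinom_P m d t ht hd)
  simpa [qbinomP_eval] using h

lemma alt_sum (q : ℂ) (e : ℕ) :
    ∑ t ∈ range (e+2), (-1:ℂ)^t * q^(t*(t-1)/2) * qbinom q (e+1) t = 0 := by
  have key : ∀ t, (-1:ℂ)^(t+1) * q^((t+1)*((t+1)-1)/2) * qbinom q (e+1) (t+1)
      = (fun s => (-1:ℂ)^s * q^(s*(s+1)/2) * qbinom q e s) (t+1)
        - (fun s => (-1:ℂ)^s * q^(s*(s+1)/2) * qbinom q e s) t := by
    intro t
    simp only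
    have h1 : (t+1)*(t+2)/2 = t*(t+1)/2 + (t+1) := by
      obtain ⟨c, hc⟩ := Nat.even_mul_succ_self t
      have h2 : (t+1)*(t+2) = t*(t+1) + 2*(t+1) := by ring
      omega
    have h0 : (t+1)*((t+1)-1)/2 = t*(t+1)/2 := by
      rw [Nat.add_sub_cancel, Nat.mul_comm]
    rw [qbinom_succ, h0, h1, pow_add, pow_succ]
    ring
  simp only [Finset.sum_range_succ' _ (e+1)]
  have tele : ∑ t ∈ range (e+1), ((-1:ℂ)^(t+1) * q^((t+1)*((t+1)-1)/2) * qbinom q (e+1) (t+1))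
      = (fun s => (-1:ℂ)^s * q^(s*(s+1)/2) * qbinom q e s) (e+1)
        - (fun s => (-1:ℂ)^s * q^(s*(s+1)/2) * qbinom q e s) 0 := by
    exact (Finset.sum_congr rfl (fun t _ => key t)).trans
      (Finset.sum_range_sub (fun s => (-1:ℂ)^s * q^(s*(s+1)/2) * qbinom q e s) (e+1))
  rw [tele]
  simp [qbinom_eq_zero q e (e+1) (by omega), qbinom_zero]

lemma two_dvd_of_odd_add {a b : ℤ} (h : Odd (a + b)) : 2 ∣ a * b := by
  rcases Int.even_or_odd a with ha | ha
  · exact Dvd.dvd.mul_right ha.two_dvd b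
  · obtain ⟨x, hx⟩ := ha
    obtain ⟨y, hy⟩ := h
    have hb : b = 2 * (y - x) := by omega
    exact Dvd.dvd.mul_left (by omega : (2:ℤ) ∣ b) a

lemma exp_combine (n i j t : ℕ) (hji : j ≤ i) (hin : i < n) (ht : t ≤ i - j) :
    (-((((i:ℤ) - (j+t:ℕ)) * (2*(n:ℤ) - 1 - i - (j+t:ℕ))) / 2)) + (((j:ℤ) - (j+t:ℕ)) * ((n:ℤ) - (j+t:ℕ)))
    = (-((((i:ℤ) - j) * (2*(n:ℤ) - 1 - i - j)) / 2)) + ((t*(t-1)/2 : ℕ) : ℤ) := by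
  obtain ⟨x, hx⟩ : (2:ℤ) ∣ ((i:ℤ) - (j+t:ℕ)) * (2*(n:ℤ) - 1 - i - (j+t:ℕ)) := by
    apply two_dvd_of_odd_add
    refine ⟨(n:ℤ) - 1 - j - t, by push_cast; ring⟩
  obtain ⟨y, hy⟩ : (2:ℤ) ∣ ((i:ℤ) - j) * (2*(n:ℤ) - 1 - i - j) := by
    apply two_dvd_of_odd_add
    refine ⟨(n:ℤ) - 1 - j, by push_cast; ring⟩
  obtain ⟨c, hc⟩ : ∃ c : ℕ, t * (t-1) = 2 * c := by
    rcases t with _ | s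
    · exact ⟨0, rfl⟩
    · obtain ⟨u, hu⟩ := Nat.even_mul_succ_self s
      exact ⟨u, by rw [Nat.add_sub_cancel, Nat.mul_comm]; omega⟩
  have hdiv : t * (t-1) / 2 = c := by omega
  rw [hx, hy, hdiv]
  rw [Int.mul_ediv_cancel_left _ (by norm_num), Int.mul_ediv_cancel_left _ (by norm_num)]
  have hc2 : (t:ℤ) * ((t:ℤ) - 1) = 2 * (c:ℤ) := by
    rcases t with _ | s
    · simpa using hc
    · rw [Nat.add_sub_cancel] at hc
      push_cast
      push_cast at hc
      linarith [hc]
  have hcast : ((j+t:ℕ):ℤ) = (j:ℤ) + t := by push_cast; ring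
  rw [hcast] at hx ⊢
  have h2 : 2 * (-x + ((j:ℤ) - ((j:ℤ)+t)) * ((n:ℤ) - ((j:ℤ)+t))) = 2 * (-y + (c:ℤ)) := by
    linear_combination hx - hy + hc2
  linarith

lemma qbinomZ_zero_of_neg (q : ℂ) {m r : ℤ} (h : r < 0) : qbinomZ q m r = 0 := by
  rw [qbinomZ, if_neg]; intro hh; omega

lemma qbinomZ_zero_of_gt (q : ℂ) {m r : ℤ} (h : m < r) : qbinomZ q m r = 0 := by
  rw [qbinomZ, if_neg]; intro hh; omega

lemma key_sum (q : ℂ) (hq : q ≠ 0) (n i j : ℕ) (hi : i < n) (hj : j < n) :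
    ∑ k ∈ range n,
      ((-1:ℂ) ^ (i + k) * q ^ (-((((i:ℤ) - k) * (2*(n:ℤ) - 1 - i - k)) / 2))
        * qbinomZ q ((n:ℤ) - (k+1)) ((i:ℤ) - k))
      * (q ^ (((j:ℤ) - k) * ((n:ℤ) - k)) * qbinomZ q ((n:ℤ) - (j+1)) ((k:ℤ) - j))
      = if i = j then 1 else 0 := by
  have hvanA : ∀ k : ℕ, i < k →
      ((-1:ℂ) ^ (i + k) * q ^ (-((((i:ℤ) - k) * (2*(n:ℤ) - 1 - i - k)) / 2))
        * qbinomZ q ((n:ℤ) - (k+1)) ((i:ℤ) - k))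
      * (q ^ (((j:ℤ) - k) * ((n:ℤ) - k)) * qbinomZ q ((n:ℤ) - (j+1)) ((k:ℤ) - j)) = 0 := by
    intro k hk
    rw [qbinomZ_zero_of_neg q (by push_cast; omega : (i:ℤ) - k < 0)]
    ring
  have hvanB : ∀ k : ℕ, k < j →
      ((-1:ℂ) ^ (i + k) * q ^ (-((((i:ℤ) - k) * (2*(n:ℤ) - 1 - i - k)) / 2))
        * qbinomZ q ((n:ℤ) - (k+1)) ((i:ℤ) - k))
      * (q ^ (((j:ℤ) - k) * ((n:ℤ) - k)) * qbinomZ q ((n:ℤ) - (j+1)) ((k:ℤ) - j)) = 0 := by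
    intro k hk
    rw [qbinomZ_zero_of_neg q (by push_cast; omega : (k:ℤ) - j < 0)]
    ring
  rcases Nat.lt_or_ge i j with hij | hij
  · rw [if_neg (by omega)]
    apply Finset.sum_eq_zero
    intro k hk
    rcases Nat.lt_or_ge k j with h | h
    · exact hvanB k h
    · exact hvanA k (by omega)
  · -- j ≤ i
    set d := i - j with hd
    set m := n - 1 - j with hm
    have hdm : d ≤ m := by omega
    -- split the range
    have hsplit : range n = range ((j + (d+1)) + (n - (j+(d+1)))) := by congr 1; omega
    rw [hsplit, Finset.sum_range_add, Finset.sum_range_add]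
    rw [Finset.sum_eq_zero (fun k hk => hvanB k (by simp at hk; omega)),
      Finset.sum_eq_zero (fun x hx => hvanA (j + (d+1) + x) (by omega))]
    rw [zero_add, add_zero]
    -- pointwise rewrite
    have hpt : ∀ t ∈ range (d+1),
        ((-1:ℂ) ^ (i + (j+t)) * q ^ (-((((i:ℤ) - (j+t:ℕ)) * (2*(n:ℤ) - 1 - i - (j+t:ℕ))) / 2))
          * qbinomZ q ((n:ℤ) - ((j+t:ℕ)+1)) ((i:ℤ) - (j+t:ℕ)))
        * (q ^ (((j:ℤ) - (j+t:ℕ)) * ((n:ℤ) - (j+t:ℕ))) * qbinomZ q ((n:ℤ) - (j+1)) (((j+t:ℕ):ℤ) - j))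
        = ((-1:ℂ)^(i+j) * q ^ (-((((i:ℤ) - j) * (2*(n:ℤ) - 1 - i - j)) / 2)) * qbinom q m d)
          * ((-1:ℂ)^t * q^(t*(t-1)/2) * qbinom q d t) := by
      intro t htr
      simp only [Finset.mem_range] at htr
      have ht : t ≤ d := by omega
      have hA : qbinomZ q ((n:ℤ) - ((j+t:ℕ)+1)) ((i:ℤ) - (j+t:ℕ)) = qbinom q (m-t) (d-t) := by
        rw [qbinomZ, if_pos (by constructor <;> push_cast <;> omega)]
        congr 1 <;> push_cast <;> omega
      have hB : qbinomZ q ((n:ℤ) - (j+1)) (((j+t:ℕ):ℤ) - j) = qbinom q m t := by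
        rw [qbinomZ, if_pos (by constructor <;> push_cast <;> omega)]
        congr 1 <;> push_cast <;> omega
      rw [hA, hB]
      have hsign : (-1:ℂ) ^ (i + (j+t)) = (-1:ℂ)^(i+j) * (-1:ℂ)^t := by
        rw [← pow_add, add_assoc]
      have hexp : q ^ (-((((i:ℤ) - (j+t:ℕ)) * (2*(n:ℤ) - 1 - i - (j+t:ℕ))) / 2))
          * q ^ (((j:ℤ) - (j+t:ℕ)) * ((n:ℤ) - (j+t:ℕ)))
          = q ^ (-((((i:ℤ) - j) * (2*(n:ℤ) - 1 - i - j)) / 2)) * q ^ (t*(t-1)/2) := by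
        rw [← zpow_add₀ hq, exp_combine n i j t hij hi (by omega), zpow_add₀ hq, zpow_natCast]
      have htri := trinom q m d t ht hdm
      calc _ = ((-1:ℂ) ^ (i + (j+t)))
            * (q ^ (-((((i:ℤ) - (j+t:ℕ)) * (2*(n:ℤ) - 1 - i - (j+t:ℕ))) / 2))
              * q ^ (((j:ℤ) - (j+t:ℕ)) * ((n:ℤ) - (j+t:ℕ))))
            * (qbinom q m t * qbinom q (m-t) (d-t)) := by ring
        _ = _ := by rw [hsign, hexp, htri]; ring
    rw [Finset.sum_congr rfl hpt, ← Finset.mul_sum]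
    rcases Nat.eq_zero_or_pos d with hd0 | hd1
    · have hij' : i = j := by omega
      rw [if_pos hij']
      subst hij'
      rw [hd0, Finset.sum_range_one]
      have e1 : ((i:ℤ) - i) = 0 := by ring
      rw [e1]
      norm_num [qbinom_zero, qbinom_self]
    · obtain ⟨e, he⟩ : ∃ e, d = e + 1 := ⟨d - 1, by omega⟩
      rw [he, show e + 1 + 1 = e + 2 by ring, alt_sum q e, mul_zero, if_neg (by omega)]

theorem inverse_of_Y
    (n : ℕ) (hn : 1 ≤ n) (q : ℂ) (hq : q ≠ 0) :
    (Matrix.of fun i j : Fin n =>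
        (-1 : ℂ) ^ (i.val + j.val)
          * q ^ (-((((i.val : ℤ) - j.val) * (2 * (n : ℤ) - 1 - i.val - j.val)) / 2))
          * qbinomZ q ((n : ℤ) - (j.val + 1)) ((i.val : ℤ) - j.val))
      * (Matrix.of fun i j : Fin n =>
        q ^ (((j.val : ℤ) - i.val) * ((n : ℤ) - i.val))
          * qbinomZ q ((n : ℤ) - (j.val + 1)) ((i.val : ℤ) - j.val)) = 1
    ∧ (Matrix.of fun i j : Fin n =>
        q ^ (((j.val : ℤ) - i.val) * ((n : ℤ) - i.val))
          * qbinomZ q ((n : ℤ) - (j.val + 1)) ((i.val : ℤ) - j.val))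
      * (Matrix.of fun i j : Fin n =>
        (-1 : ℂ) ^ (i.val + j.val)
          * q ^ (-((((i.val : ℤ) - j.val) * (2 * (n : ℤ) - 1 - i.val - j.val)) / 2))
          * qbinomZ q ((n : ℤ) - (j.val + 1)) ((i.val : ℤ) - j.val)) = 1 := by
  have hAB : (Matrix.of fun i j : Fin n =>
        (-1 : ℂ) ^ (i.val + j.val)
          * q ^ (-((((i.val : ℤ) - j.val) * (2 * (n : ℤ) - 1 - i.val - j.val)) / 2))
          * qbinomZ q ((n : ℤ) - (j.val + 1)) ((i.val : ℤ) - j.val))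
      * (Matrix.of fun i j : Fin n =>
        q ^ (((j.val : ℤ) - i.val) * ((n : ℤ) - i.val))
          * qbinomZ q ((n : ℤ) - (j.val + 1)) ((i.val : ℤ) - j.val)) = 1 := by
    ext i j
    rw [Matrix.mul_apply]
    have hs : (∑ k : Fin n,
        (Matrix.of fun i j : Fin n =>
          (-1 : ℂ) ^ (i.val + j.val)
            * q ^ (-((((i.val : ℤ) - j.val) * (2 * (n : ℤ) - 1 - i.val - j.val)) / 2))
            * qbinomZ q ((n : ℤ) - (j.val + 1)) ((i.val : ℤ) - j.val)) i k
        * (Matrix.of fun i j : Fin n =>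
          q ^ (((j.val : ℤ) - i.val) * ((n : ℤ) - i.val))
            * qbinomZ q ((n : ℤ) - (j.val + 1)) ((i.val : ℤ) - j.val)) k j)
        = ∑ k ∈ range n,
          ((-1:ℂ) ^ (i.val + k) * q ^ (-((((i.val:ℤ) - k) * (2*(n:ℤ) - 1 - i.val - k)) / 2))
            * qbinomZ q ((n:ℤ) - (k+1)) ((i.val:ℤ) - k))
          * (q ^ (((j.val:ℤ) - k) * ((n:ℤ) - k)) * qbinomZ q ((n:ℤ) - (j.val+1)) ((k:ℤ) - j.val)) :=
      Fin.sum_univ_eq_sum_range (fun k =>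
        ((-1:ℂ) ^ (i.val + k) * q ^ (-((((i.val:ℤ) - k) * (2*(n:ℤ) - 1 - i.val - k)) / 2))
          * qbinomZ q ((n:ℤ) - (k+1)) ((i.val:ℤ) - k))
        * (q ^ (((j.val:ℤ) - k) * ((n:ℤ) - k)) * qbinomZ q ((n:ℤ) - (j.val+1)) ((k:ℤ) - j.val))) n
    rw [hs, key_sum q hq n i.val j.val i.isLt j.isLt, Matrix.one_apply]
    simp [Fin.ext_iff]
  exact ⟨hAB, mul_eq_one_comm.mp hAB⟩
end

section
/- With R_{n,ν}(k,a,b;q) defined as the sum over partitions of {1,...,n} into disjoint subsets i = {i_1<...<i_{n-ν}} and j = {j_1<...<j_ν} of q^{(\sum_l i_l)-n+ν} \prod_{l=1}^{n-ν}(1 - a q^{k_{i_l}-i_l+l+ν}) \prod_{l=1}^{ν}(1 - a b q^{k_{j_l}+j_l-l+ν-1}), one has \sum_{ν=0}^n (-1)^{n-ν} R_{n,ν}(k, a, b; q) = a^n q^{n(n-1)/2 + \sum_{l=1}^n k_l} (b; q)_n. -/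
open Finset


/-- `R_{n,ν}(k,a,b;q)`: the sum over partitions of `{1,…,n}` into an increasing sequence
`i₁ < ⋯ < i_{n-ν}` and an increasing sequence `j₁ < ⋯ < j_ν` of
`q^{∑ i_l - n + ν} ∏_l (1 - a q^{k_{i_l} - i_l + l + ν}) ∏_l (1 - a b q^{k_{j_l} + j_l - l + ν - 1})`,
with the convention that it is `0` unless `0 ≤ ν ≤ n`. -/
noncomputable def Rfun (a b q : ℂ) (k : ℕ → ℕ) (n : ℕ) (ν : ℤ) : ℂ :=
  if 0 ≤ ν ∧ ν ≤ n then
    ∑ s ∈ (Finset.Icc 1 n).powersetCard (n - ν.toNat),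
      q ^ ((∑ x ∈ s, (x : ℤ)) - n + ν)
        * (∏ l ∈ Finset.range (n - ν.toNat),
            (1 - a * q ^ ((k ((s.sort (· ≤ ·)).getD l 0) : ℤ)
                - ((s.sort (· ≤ ·)).getD l 0 : ℤ) + (l + 1) + ν)))
        * (∏ l ∈ Finset.range ν.toNat,
            (1 - a * b * q ^ ((k (((Finset.Icc 1 n \ s).sort (· ≤ ·)).getD l 0) : ℤ)
                + (((Finset.Icc 1 n \ s).sort (· ≤ ·)).getD l 0 : ℤ) - (l + 1) + ν - 1)))
  else 0

def LL (s : Finset ℕ) (l : ℕ) : ℕ := (s.sort (· ≤ ·)).getD l 0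

lemma sort_insert_max {s : Finset ℕ} {m : ℕ} (h : ∀ x ∈ s, x < m) :
    (insert m s).sort (· ≤ ·) = s.sort (· ≤ ·) ++ [m] := by
  have hm : m ∉ s := fun hms => lt_irrefl m (h m hms)
  refine (fun hp hs => List.Perm.eq_of_pairwise' (Finset.pairwise_sort _ _) hs hp) ?_ ?_
  · have h1 : List.Perm ((insert m s).sort (· ≤ ·)) (m :: s.sort (· ≤ ·)) := by
      rw [← Multiset.coe_eq_coe, Finset.sort_eq, Finset.insert_val_of_notMem hm,
        ← Multiset.cons_coe, Finset.sort_eq]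
    exact h1.trans (List.perm_append_singleton m _).symm
  · rw [List.pairwise_append]
    refine ⟨Finset.pairwise_sort _ _, by simp, ?_⟩
    intro x hx y hy
    simp only [List.mem_singleton] at hy
    subst hy
    exact le_of_lt (h x ((Finset.mem_sort _).1 hx))

lemma LL_insert_lt {s : Finset ℕ} {m : ℕ} (h : ∀ x ∈ s, x < m) {l : ℕ} (hl : l < s.card) :
    LL (insert m s) l = LL s l := by
  unfold LL
  rw [sort_insert_max h, List.getD_append]
  rwa [Finset.length_sort]

lemma LL_insert_last {s : Finset ℕ} {m : ℕ} (h : ∀ x ∈ s, x < m) :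
    LL (insert m s) s.card = m := by
  unfold LL
  rw [sort_insert_max h, List.getD_append_right]
  · simp [Finset.length_sort]
  · simp [Finset.length_sort]

noncomputable def Rterm (a b q : ℂ) (k : ℕ → ℕ) (n : ℕ) (s : Finset ℕ) : ℂ :=
  q ^ ((∑ x ∈ s, (x : ℤ)) - (s.card : ℤ))
    * (∏ l ∈ Finset.range s.card,
        (1 - a * q ^ ((k (LL s l) : ℤ) - (LL s l : ℤ) + (l + 1) + ((n : ℤ) - (s.card : ℤ)))))
    * (∏ l ∈ Finset.range (n - s.card),
        (1 - a * b * q ^ ((k (LL (Finset.Icc 1 n \ s) l) : ℤ)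
            + (LL (Finset.Icc 1 n \ s) l : ℤ) - (l + 1) + ((n : ℤ) - (s.card : ℤ)) - 1)))

lemma Rterm_insert_top (a b q : ℂ) (hq : q ≠ 0) (k : ℕ → ℕ) (n : ℕ) (s : Finset ℕ)
    (hs : s ⊆ Finset.Icc 1 n) :
    Rterm a b q k (n+1) (insert (n+1) s)
      = q ^ (n : ℤ) * (1 - a * q ^ (k (n+1) : ℤ)) * Rterm a b q k n s := by
  have hlt : ∀ x ∈ s, x < n+1 := fun x hx => by
    have := Finset.mem_Icc.1 (hs hx); omega
  have hm : (n+1) ∉ s := fun h => lt_irrefl _ (hlt _ h)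
  have hcard : (insert (n+1) s).card = s.card + 1 := Finset.card_insert_of_notMem hm
  have hcle : s.card ≤ n := by
    have := Finset.card_le_card hs
    simpa [Nat.card_Icc] using this
  have hcompl : Finset.Icc 1 (n+1) \ insert (n+1) s = Finset.Icc 1 n \ s := by
    ext x
    simp only [Finset.mem_sdiff, Finset.mem_Icc, Finset.mem_insert, not_or]
    constructor
    · rintro ⟨⟨h1, h2⟩, h3, h4⟩
      exact ⟨⟨h1, by omega⟩, h4⟩
    · rintro ⟨⟨h1, h2⟩, h3⟩
      exact ⟨⟨h1, by omega⟩, by omega, h3⟩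
  unfold Rterm
  rw [hcompl, hcard, Finset.sum_insert hm, Finset.prod_range_succ,
    show n + 1 - (s.card + 1) = n - s.card from by omega]
  have e1 : q ^ ((((n:ℕ)+1 : ℕ) : ℤ) + (∑ x ∈ s, (x : ℤ)) - ((s.card + 1 : ℕ) : ℤ))
      = q ^ ((n : ℤ)) * q ^ ((∑ x ∈ s, (x : ℤ)) - (s.card : ℤ)) := by
    rw [← zpow_add₀ hq]
    congr 1
    push_cast
    ring
  have e2 : (∏ l ∈ Finset.range s.card,
        (1 - a * q ^ ((k (LL (insert (n+1) s) l) : ℤ) - (LL (insert (n+1) s) l : ℤ)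
          + (l + 1) + (((n+1 : ℕ) : ℤ) - ((s.card + 1 : ℕ) : ℤ)))))
      = ∏ l ∈ Finset.range s.card,
        (1 - a * q ^ ((k (LL s l) : ℤ) - (LL s l : ℤ) + (l + 1) + ((n : ℤ) - (s.card : ℤ)))) := by
    refine Finset.prod_congr rfl fun l hl => ?_
    rw [LL_insert_lt hlt (Finset.mem_range.1 hl)]
    congr 2
    push_cast
    ring
  have e3 : (1 - a * q ^ ((k (LL (insert (n+1) s) s.card) : ℤ)
        - (LL (insert (n+1) s) s.card : ℤ) + ((s.card : ℤ) + 1)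
        + (((n+1 : ℕ) : ℤ) - ((s.card + 1 : ℕ) : ℤ))))
      = 1 - a * q ^ (k (n+1) : ℤ) := by
    rw [LL_insert_last hlt]
    congr 2
    push_cast
    ring
  have e4 : (∏ l ∈ Finset.range (n - s.card),
        (1 - a * b * q ^ ((k (LL (Finset.Icc 1 n \ s) l) : ℤ)
          + (LL (Finset.Icc 1 n \ s) l : ℤ) - (l + 1)
          + (((n+1 : ℕ) : ℤ) - ((s.card + 1 : ℕ) : ℤ)) - 1)))
      = ∏ l ∈ Finset.range (n - s.card),
        (1 - a * b * q ^ ((k (LL (Finset.Icc 1 n \ s) l) : ℤ)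
          + (LL (Finset.Icc 1 n \ s) l : ℤ) - (l + 1) + ((n : ℤ) - (s.card : ℤ)) - 1)) := by
    refine Finset.prod_congr rfl fun l hl => ?_
    congr 2
    push_cast
    ring
  push_cast at e1 e2 e3 e4 ⊢
  rw [e1, e2, e3, e4]
  ring

lemma Rterm_no_top (a b q : ℂ) (hq : q ≠ 0) (k : ℕ → ℕ) (n : ℕ) (s : Finset ℕ)
    (hs : s ⊆ Finset.Icc 1 n) :
    Rterm a b q k (n+1) s
      = (1 - a * b * q ^ ((k (n+1) : ℤ) + (n : ℤ))) * Rterm (a * q) b q k n s := by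
  have hcle : s.card ≤ n := by
    have := Finset.card_le_card hs
    simpa [Nat.card_Icc] using this
  have hltc : ∀ x ∈ Finset.Icc 1 n \ s, x < n + 1 := fun x hx => by
    have := (Finset.mem_Icc.1 (Finset.mem_sdiff.1 hx).1).2; omega
  have hcardc : (Finset.Icc 1 n \ s).card = n - s.card := by
    rw [Finset.card_sdiff_of_subset hs, Nat.card_Icc]
    omega
  have hcompl : Finset.Icc 1 (n+1) \ s = insert (n+1) (Finset.Icc 1 n \ s) := by
    ext x
    simp only [Finset.mem_sdiff, Finset.mem_Icc, Finset.mem_insert]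
    constructor
    · rintro ⟨⟨h1, h2⟩, h3⟩
      rcases Nat.lt_or_ge x (n+1) with h | h
      · exact Or.inr ⟨⟨h1, by omega⟩, h3⟩
      · exact Or.inl (by omega)
    · rintro (rfl | ⟨⟨h1, h2⟩, h3⟩)
      · refine ⟨⟨by omega, le_refl _⟩, fun hx => ?_⟩
        have := (Finset.mem_Icc.1 (hs hx)).2; omega
      · exact ⟨⟨h1, by omega⟩, h3⟩
  unfold Rterm
  rw [hcompl, show n + 1 - s.card = (n - s.card) + 1 from by omega, Finset.prod_range_succ]
  have e2 : (∏ l ∈ Finset.range s.card,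
        (1 - a * q ^ ((k (LL s l) : ℤ) - (LL s l : ℤ) + (l + 1) + (((n+1:ℕ) : ℤ) - (s.card : ℤ)))))
      = ∏ l ∈ Finset.range s.card,
        (1 - a * q * q ^ ((k (LL s l) : ℤ) - (LL s l : ℤ) + (l + 1) + ((n : ℤ) - (s.card : ℤ)))) := by
    refine Finset.prod_congr rfl fun l hl => ?_
    have he : ((k (LL s l) : ℤ) - (LL s l : ℤ) + (l + 1) + (((n+1:ℕ) : ℤ) - (s.card : ℤ)))
        = ((k (LL s l) : ℤ) - (LL s l : ℤ) + (l + 1) + ((n : ℤ) - (s.card : ℤ))) + 1 := by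
      push_cast; ring
    rw [he, zpow_add_one₀ hq]
    ring
  have e3 : (1 - a * b * q ^ ((k (LL (insert (n+1) (Finset.Icc 1 n \ s)) (n - s.card)) : ℤ)
        + (LL (insert (n+1) (Finset.Icc 1 n \ s)) (n - s.card) : ℤ)
        - (((n - s.card : ℕ) : ℤ) + 1) + (((n+1:ℕ) : ℤ) - (s.card : ℤ)) - 1))
      = 1 - a * b * q ^ ((k (n+1) : ℤ) + (n : ℤ)) := by
    rw [show n - s.card = (Finset.Icc 1 n \ s).card from hcardc.symm, LL_insert_last hltc]
    congr 2
    rw [hcardc]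
    push_cast [hcle]
    ring
  have e4 : (∏ l ∈ Finset.range (n - s.card),
        (1 - a * b * q ^ ((k (LL (insert (n+1) (Finset.Icc 1 n \ s)) l) : ℤ)
          + (LL (insert (n+1) (Finset.Icc 1 n \ s)) l : ℤ) - (l + 1)
          + (((n+1:ℕ) : ℤ) - (s.card : ℤ)) - 1)))
      = ∏ l ∈ Finset.range (n - s.card),
        (1 - a * q * b * q ^ ((k (LL (Finset.Icc 1 n \ s) l) : ℤ)
          + (LL (Finset.Icc 1 n \ s) l : ℤ) - (l + 1) + ((n : ℤ) - (s.card : ℤ)) - 1)) := by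
    refine Finset.prod_congr rfl fun l hl => ?_
    rw [LL_insert_lt hltc (by rw [hcardc]; exact Finset.mem_range.1 hl)]
    have he : ((k (LL (Finset.Icc 1 n \ s) l) : ℤ) + (LL (Finset.Icc 1 n \ s) l : ℤ) - (l + 1)
          + (((n+1:ℕ) : ℤ) - (s.card : ℤ)) - 1)
        = ((k (LL (Finset.Icc 1 n \ s) l) : ℤ) + (LL (Finset.Icc 1 n \ s) l : ℤ) - (l + 1)
          + ((n : ℤ) - (s.card : ℤ)) - 1) + 1 := by
      push_cast; ring
    rw [he, zpow_add_one₀ hq]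
    ring
  rw [e2, e3, e4]
  ring

noncomputable def Fsum (b q : ℂ) (k : ℕ → ℕ) (a : ℂ) (n : ℕ) : ℂ :=
  ∑ s ∈ (Finset.Icc 1 n).powerset, (-1 : ℂ) ^ s.card * Rterm a b q k n s

lemma Fsum_eq (b q : ℂ) (k : ℕ → ℕ) (hq : q ≠ 0) :
    ∀ n, ∀ a : ℂ, Fsum b q k a n
      = a ^ n * q ^ (n * (n-1) / 2 + ∑ l ∈ Finset.Icc 1 n, k l) * qPoch b q n := by
  intro n
  induction n with
  | zero =>
    intro a
    have h0 : Finset.Icc 1 0 = (∅ : Finset ℕ) := by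
      apply Finset.Icc_eq_empty; omega
    simp [Fsum, Rterm, qPoch, h0]
  | succ n ih =>
    intro a
    have hns : (n+1) ∉ Finset.Icc 1 n := by simp
    have hIcc : Finset.Icc 1 (n+1) = insert (n+1) (Finset.Icc 1 n) := by
      ext x; simp only [Finset.mem_Icc, Finset.mem_insert]; omega
    have hstep : Fsum b q k a (n+1)
        = (1 - a * b * q ^ ((k (n+1) : ℤ) + (n : ℤ))) * Fsum b q k (a*q) n
          - q ^ (n : ℤ) * (1 - a * q ^ (k (n+1) : ℤ)) * Fsum b q k a n := by
      unfold Fsum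
      rw [hIcc, Finset.sum_powerset_insert hns]
      have h1 : ∑ s ∈ (Finset.Icc 1 n).powerset, (-1:ℂ)^s.card * Rterm a b q k (n+1) s
          = (1 - a * b * q ^ ((k (n+1) : ℤ) + (n : ℤ)))
            * ∑ s ∈ (Finset.Icc 1 n).powerset, (-1:ℂ)^s.card * Rterm (a*q) b q k n s := by
        rw [Finset.mul_sum]
        refine Finset.sum_congr rfl fun s hs => ?_
        rw [Rterm_no_top a b q hq k n s (Finset.mem_powerset.1 hs)]
        ring
      have h2 : ∑ s ∈ (Finset.Icc 1 n).powerset,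
            (-1:ℂ)^(insert (n+1) s).card * Rterm a b q k (n+1) (insert (n+1) s)
          = -(q ^ (n:ℤ) * (1 - a * q ^ (k (n+1) : ℤ))
            * ∑ s ∈ (Finset.Icc 1 n).powerset, (-1:ℂ)^s.card * Rterm a b q k n s) := by
        rw [Finset.mul_sum, ← Finset.sum_neg_distrib]
        refine Finset.sum_congr rfl fun s hs => ?_
        have hsub := Finset.mem_powerset.1 hs
        have hnm : (n+1) ∉ s := fun h => by
          have := (Finset.mem_Icc.1 (hsub h)).2; omega
        rw [Finset.card_insert_of_notMem hnm, Rterm_insert_top a b q hq k n s hsub, pow_succ]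
        ring
      rw [h1, h2]
      ring
    rw [hstep, ih, ih]
    have hK : ((k (n+1) : ℤ) + (n : ℤ)) = ((k (n+1) + n : ℕ) : ℤ) := by push_cast; ring
    rw [hK]
    simp only [zpow_natCast]
    have hsum2 : ∀ m : ℕ, m * (m-1) / 2 = ∑ i ∈ Finset.range m, i := by
      intro m
      rw [← Finset.sum_range_id_mul_two m, Nat.mul_div_cancel _ (by norm_num)]
    have hC' : (n+1) * ((n+1)-1) / 2 + ∑ l ∈ Finset.Icc 1 (n+1), k l
        = (n*(n-1)/2 + ∑ l ∈ Finset.Icc 1 n, k l) + (n + k (n+1)) := by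
      rw [Finset.sum_Icc_succ_top (by omega : 1 ≤ n+1), hsum2, hsum2, Finset.sum_range_succ]
      omega
    rw [hC', show qPoch b q (n+1) = qPoch b q n * (1 - b * q^n) from Finset.prod_range_succ _ n,
      pow_add, pow_add, pow_add]
    ring

lemma sum_powerset_eq (t : Finset ℕ) (g : Finset ℕ → ℂ) :
    ∑ s ∈ t.powerset, g s = ∑ j ∈ Finset.range (t.card + 1), ∑ s ∈ t.powersetCard j, g s := by
  rw [← Finset.sum_fiberwise_of_maps_to (g := Finset.card) (t := Finset.range (t.card + 1))
    (fun s hs => Finset.mem_range.2 (Nat.lt_succ_of_le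
      (Finset.card_le_card (Finset.mem_powerset.1 hs)))) g]
  exact Finset.sum_congr rfl fun j _ => by rw [Finset.powersetCard_eq_filter]

theorem Rfun_alternating_sum'
    (n : ℕ) (k : ℕ → ℕ)
    (a b q : ℂ) (hq : q ≠ 0) :
    ∑ ν ∈ Finset.range (n+1), (-1 : ℂ) ^ (n - ν) * Rfun a b q k n (ν : ℤ)
      = a ^ n * q ^ (n * (n-1) / 2 + ∑ l ∈ Finset.Icc 1 n, k l) * qPoch b q n := by
  rw [← Fsum_eq b q k hq n a]
  unfold Fsum
  rw [sum_powerset_eq]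
  simp only [Nat.card_Icc, Nat.add_sub_cancel]
  rw [← Finset.sum_range_reflect]
  simp only [Nat.add_sub_cancel]
  refine Finset.sum_congr rfl fun j hj => ?_
  have hjn : j ≤ n := by have := Finset.mem_range.1 hj; omega
  rw [show n - (n - j) = j from by omega]
  unfold Rfun
  rw [if_pos ⟨Int.natCast_nonneg _, by exact_mod_cast Nat.sub_le n j⟩]
  simp only [Int.toNat_natCast]
  rw [show n - (n - j) = j from by omega, Finset.mul_sum]
  refine Finset.sum_congr rfl fun s hs => ?_
  obtain ⟨hsub, hcard⟩ := Finset.mem_powersetCard.1 hs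
  have hcle : s.card ≤ n := hcard ▸ hjn
  unfold Rterm LL
  subst hcard
  have hν : ((n - s.card : ℕ) : ℤ) = (n : ℤ) - (s.card : ℤ) := by
    push_cast [hcle]; ring
  have e1 : q ^ ((∑ x ∈ s, (x : ℤ)) - (n : ℤ) + ((n - s.card : ℕ) : ℤ))
      = q ^ ((∑ x ∈ s, (x : ℤ)) - (s.card : ℤ)) := by
    congr 1
    rw [hν]; ring
  have e2 : (∏ l ∈ Finset.range s.card,
        (1 - a * q ^ ((k ((s.sort (· ≤ ·)).getD l 0) : ℤ)
            - (((s.sort (· ≤ ·)).getD l 0 : ℕ) : ℤ) + (l + 1) + ((n - s.card : ℕ) : ℤ))))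
      = ∏ l ∈ Finset.range s.card,
        (1 - a * q ^ ((k ((s.sort (· ≤ ·)).getD l 0) : ℤ)
            - (((s.sort (· ≤ ·)).getD l 0 : ℕ) : ℤ) + (l + 1) + ((n : ℤ) - (s.card : ℤ)))) := by
    refine Finset.prod_congr rfl fun l _ => ?_
    rw [hν]
  have e3 : (∏ l ∈ Finset.range (n - s.card),
        (1 - a * b * q ^ ((k (((Finset.Icc 1 n \ s).sort (· ≤ ·)).getD l 0) : ℤ)
            + ((((Finset.Icc 1 n \ s).sort (· ≤ ·)).getD l 0 : ℕ) : ℤ) - (l + 1)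
            + ((n - s.card : ℕ) : ℤ) - 1)))
      = ∏ l ∈ Finset.range (n - s.card),
        (1 - a * b * q ^ ((k (((Finset.Icc 1 n \ s).sort (· ≤ ·)).getD l 0) : ℤ)
            + ((((Finset.Icc 1 n \ s).sort (· ≤ ·)).getD l 0 : ℕ) : ℤ) - (l + 1)
            + ((n : ℤ) - (s.card : ℤ)) - 1)) := by
    refine Finset.prod_congr rfl fun l _ => ?_
    rw [hν]
  rw [e1, e2, e3]

theorem Rfun_alternating_sum
    (n : ℕ) (hn : 1 ≤ n) (k : ℕ → ℕ) (hk : ∀ i, 1 ≤ k i)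
    (a b q : ℂ) (hq : q ≠ 0) :
    ∑ ν ∈ Finset.range (n+1), (-1 : ℂ) ^ (n - ν) * Rfun a b q k n (ν : ℤ)
      = a ^ n * q ^ (n * (n-1) / 2 + ∑ l ∈ Finset.Icc 1 n, k l) * qPoch b q n := by
  exact Rfun_alternating_sum' n k a b q hq
end
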